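/- arXiv:2305.02252 — 2 statements merged into one kernel-verified Lean document; each statement's English description precedes it below -/
import Mathlib

section
/- Fix δ ∈ (0,1) and assume the uniform convergence assumption holds with constants C1, C2. Let r̂ = 2^ĵ, where ĵ is the least integer j ≥ 0 such that either 2^{j+1} > T or ‖𝔔_T^{2^j} − 𝔔_T^{2^{j+1}}‖_F > 4·S(2^j, δ). Then with probability at least 1 − δ, ‖P_T − 𝔔_T^{r̂}‖_F ≤ 22 · min_{1 ≤ r ≤ T} ( 21·S(r, δ) + max_{0 ≤ t ≤ r−1} ‖P_T − P_{T−t}‖_F ). -/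
open MeasureTheory ProbabilityTheory

/-- The discrepancy `‖P − Q‖_F`. -/
noncomputable def dF {ι Z : Type*} [MeasurableSpace Z] (F : ι → Z → ℝ)
    (P Q : Measure Z) : ℝ :=
  ⨆ n, |(∫ z, F n z ∂P) - ∫ z, F n z ∂Q|

/-- The average distribution `P_T^r = (1/r)·Σ_{t=T−r+1}^T P_t`. -/
noncomputable def avgMeas {Z : Type*} [MeasurableSpace Z]
    (P : ℕ → Measure Z) (T r : ℕ) : Measure Z :=
  (r : ENNReal)⁻¹ • ∑ t ∈ Finset.Icc (T - r + 1) T, P t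

/-- Empirical average `(1/r)·Σ_{t=T−r+1}^T f(Z_t(ω))`. -/
noncomputable def empAvg {Z Ω : Type*} (Zs : ℕ → Ω → Z) (T r : ℕ)
    (f : Z → ℝ) (ω : Ω) : ℝ :=
  (r : ℝ)⁻¹ * ∑ t ∈ Finset.Icc (T - r + 1) T, f (Zs t ω)

/-- `‖P − 𝔔_T^r(ω)‖_F`. -/
noncomputable def dPE {ι Z Ω : Type*} [MeasurableSpace Z] (F : ι → Z → ℝ)
    (P : Measure Z) (Zs : ℕ → Ω → Z) (T r : ℕ) (ω : Ω) : ℝ :=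
  ⨆ n, |(∫ z, F n z ∂P) - empAvg Zs T r (F n) ω|

/-- `‖𝔔_T^r(ω) − 𝔔_T^s(ω)‖_F`. -/
noncomputable def dEE {ι Z Ω : Type*} (F : ι → Z → ℝ) (Zs : ℕ → Ω → Z)
    (T r s : ℕ) (ω : Ω) : ℝ :=
  ⨆ n, |empAvg Zs T r (F n) ω - empAvg Zs T s (F n) ω|

/-- `S(r, δ)`. -/
noncomputable def Sfun (C1 C2 r δ : ℝ) : ℝ :=
  (C1 + C2 * Real.sqrt (2 * Real.log (Real.pi ^ 2 / (6 * δ)))) / Real.sqrt r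
    + C2 * Real.sqrt (2 * Real.log (Real.logb 2 r + 10) / r)

/-- `max_{0 ≤ t ≤ r−1} ‖P_T − P_{T−t}‖_F`. -/
noncomputable def maxDrift {ι Z : Type*} [MeasurableSpace Z] (F : ι → Z → ℝ)
    (P : ℕ → Measure Z) (T r : ℕ) : ℝ :=
  ⨆ t : Fin r, dF F (P T) (P (T - (t : ℕ)))

/-- The stopping condition of the adaptive algorithm at step `j`:
either the doubled window no longer fits the data, or the empirical
discrepancy between windows `2^j` and `2^{j+1}` exceeds `4·S(2^j, δ)`. -/
def stopCond {ι Z Ω : Type*} (F : ι → Z → ℝ) (Zs : ℕ → Ω → Z)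
    (T : ℕ) (C1 C2 δ : ℝ) (j : ℕ) (ω : Ω) : Prop :=
  2 ^ (j + 1) > T ∨
    dEE F Zs T (2 ^ j) (2 ^ (j + 1)) ω > 4 * Sfun C1 C2 (2 ^ j : ℕ) δ

/-!
Give the window `2^j` the confidence level `δ_j = 6δ / (π² (j + 10)²)`. By the uniform convergence
assumption and a union bound, with probability at least `1 − δ` every dyadic window `2^j ≤ T`
satisfies `‖P_T^{2^j} − 𝔔_T^{2^j}‖_F ≤ S(2^j, δ)`, and on this event the rest is deterministic
(Lepski's method). Fix `r` and `2^{j₀} ≤ r < 2^{j₀+1}`; the error of window `2^j` is at most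
`S(2^j) + b(2^j)`, with `b` the drift term. If the rule stops before `j₀`, the observed jump
`> 4 S(2^ĵ)` can only be explained by a drift exceeding `S(2^ĵ)`, so the error is at most twice the
drift. Otherwise the error at `2^ĵ` exceeds the error at `2^{j₀}` by at most the accepted jumps
`≤ 4 S(2^j)`, `j₀ ≤ j < ĵ`, and these sum to `≤ 16 S(2^{j₀})` because `S(2r, δ) ≤ (3/4) S(r, δ)`.
-/

open Real

lemma log_add_eleven_le {x : ℝ} (hx : 0 ≤ x) : log (x + 11) ≤ 9 / 8 * log (x + 10) := by
  have h10 : 1 < log (x + 10) := by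
    rw [lt_log_iff_exp_lt (by linarith)]
    linarith [exp_one_lt_d9]
  have hstep : log (x + 11) - log (x + 10) ≤ 1 / 10 := by
    rw [← log_div (by linarith) (by linarith)]
    refine (log_le_sub_one_of_pos (by positivity)).trans ?_
    rw [div_sub_one (by linarith), div_le_div_iff₀ (by linarith) (by norm_num)]
    linarith
  linarith

lemma Sfun_eq {r : ℝ} (C1 C2 δ : ℝ) (hr : 0 ≤ r) :
    Sfun C1 C2 r δ = (C1 + C2 * √(2 * log (π ^ 2 / (6 * δ)))
      + C2 * √(2 * log (logb 2 r + 10))) / √r := by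
  rw [Sfun, sqrt_div' _ hr]
  ring

lemma Sfun_nonneg {C1 C2 : ℝ} (hC1 : 0 ≤ C1) (hC2 : 0 ≤ C2) (r δ : ℝ) :
    0 ≤ Sfun C1 C2 r δ := by
  unfold Sfun
  positivity

lemma Sfun_two_mul_le {C1 C2 r : ℝ} (hC1 : 0 ≤ C1) (hC2 : 0 ≤ C2) (δ : ℝ) (hr : 1 ≤ r) :
    Sfun C1 C2 (2 * r) δ ≤ 3 / 4 * Sfun C1 C2 r δ := by
  have hlogb : logb 2 (2 * r) = logb 2 r + 1 := by
    rw [logb_mul (by norm_num) (by positivity), logb_self_eq_one one_lt_two, add_comm]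
  have hx : 0 ≤ logb 2 r := logb_nonneg one_lt_two hr
  rw [Sfun_eq _ _ _ (by positivity), Sfun_eq _ _ _ (by positivity), hlogb, add_assoc _ 1,
    show (1 : ℝ) + 10 = 11 by norm_num]
  set A := C1 + C2 * √(2 * log (π ^ 2 / (6 * δ)))
  set L := √(2 * log (logb 2 r + 10))
  have hA : 0 ≤ A := by positivity
  -- the numerator grows by at most `√(9/8) = 3/4 · √2`, the denominator by `√2`
  have hL : √(2 * log (logb 2 r + 11)) ≤ 3 / 4 * √2 * L := by
    have h98 : √(9 / 8 : ℝ) = 3 / 4 * √2 := by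
      rw [show (9 / 8 : ℝ) = (3 / 4) ^ 2 * 2 by norm_num, sqrt_mul (by positivity),
        sqrt_sq (by norm_num)]
    rw [← h98, ← sqrt_mul (by norm_num)]
    exact sqrt_le_sqrt (by linarith [log_add_eleven_le hx])
  have h2 : (1 : ℝ) ≤ 3 / 4 * √2 := by
    nlinarith [sq_sqrt (show (0 : ℝ) ≤ 2 by norm_num), sqrt_nonneg 2]
  have hnum : A + C2 * √(2 * log (logb 2 r + 11)) ≤ 3 / 4 * √2 * (A + C2 * L) := by
    nlinarith [mul_le_mul_of_nonneg_left hL hC2]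
  rw [sqrt_mul (by norm_num : (0 : ℝ) ≤ 2) r, div_le_iff₀ (by positivity)]
  calc A + C2 * √(2 * log (logb 2 r + 11)) ≤ 3 / 4 * √2 * (A + C2 * L) := hnum
    _ = 3 / 4 * ((A + C2 * L) / √r) * (√2 * √r) := by
      field_simp [(sqrt_pos.2 (by linarith : (0 : ℝ) < r)).ne']

lemma Sfun_le_two_mul_Sfun {C1 C2 r s : ℝ} (hC1 : 0 ≤ C1) (hC2 : 0 ≤ C2) (δ : ℝ)
    (hs : 1 ≤ s) (hsr : s ≤ r) (hr : r ≤ 4 * s) :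
    Sfun C1 C2 s δ ≤ 2 * Sfun C1 C2 r δ := by
  rw [Sfun_eq _ _ _ (by linarith), Sfun_eq _ _ _ (by linarith)]
  have hlog : √(2 * log (logb 2 s + 10)) ≤ √(2 * log (logb 2 r + 10)) := by
    have hlogb := logb_le_logb_of_le one_lt_two (by positivity) hsr
    have hlogb0 := logb_nonneg one_lt_two hs
    gcongr
  have hsqrt : √r ≤ 2 * √s := by
    rw [show (2 : ℝ) * √s = √(4 * s) by
      rw [sqrt_mul (by norm_num), show (4 : ℝ) = 2 ^ 2 by norm_num, sqrt_sq (by norm_num)]]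
    exact sqrt_le_sqrt hr
  have hs0 : 0 < √s := sqrt_pos.2 (by linarith)
  have hr0 : 0 < √r := sqrt_pos.2 (by linarith)
  rw [mul_div_assoc', div_le_div_iff₀ hs0 hr0]
  set A := C1 + C2 * √(2 * log (π ^ 2 / (6 * δ)))
  have hN : 0 ≤ A + C2 * √(2 * log (logb 2 r + 10)) := by positivity
  calc (A + C2 * √(2 * log (logb 2 s + 10))) * √r
      ≤ (A + C2 * √(2 * log (logb 2 r + 10))) * (2 * √s) := by gcongr
    _ = 2 * (A + C2 * √(2 * log (logb 2 r + 10))) * √s := by ring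

lemma sum_Ico_le_div_one_sub {g : ℕ → ℝ} {c : ℝ} (hc : c < 1) (hg0 : ∀ j, 0 ≤ g j)
    (hg : ∀ j, g (j + 1) ≤ c * g j) (m n : ℕ) :
    ∑ j ∈ Finset.Ico m n, g j ≤ g m / (1 - c) := by
  have hc' : 0 < 1 - c := by linarith
  induction h : n - m generalizing m with
  | zero =>
    rw [Finset.Ico_eq_empty (by omega), Finset.sum_empty]
    exact div_nonneg (hg0 m) hc'.le
  | succ k ih =>
    rw [Finset.sum_eq_sum_Ico_succ_bot (by omega)]
    calc g m + ∑ j ∈ Finset.Ico (m + 1) n, g j ≤ g m + g (m + 1) / (1 - c) := by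
          gcongr; exact ih (m + 1) (by omega)
      _ ≤ g m + c * g m / (1 - c) := by gcongr; exact hg m
      _ = g m / (1 - c) := by field_simp; ring

lemma le_add_sum_Ico_of_succ_le {d e : ℕ → ℝ} {m n : ℕ} (hmn : m ≤ n)
    (h : ∀ j ∈ Finset.Ico m n, d (j + 1) ≤ d j + e j) :
    d n ≤ d m + ∑ j ∈ Finset.Ico m n, e j := by
  induction n, hmn using Nat.le_induction with
  | base => simp
  | succ n hmn ih =>
    rw [Finset.sum_Ico_succ_top hmn]
    have hn := h n (Finset.mem_Ico.2 ⟨hmn, n.lt_succ_self⟩)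
    have hih := ih fun j hj => h j (Finset.Ico_subset_Ico_right n.le_succ hj)
    linarith

lemma le_of_doubling_stop {d e g b : ℕ → ℝ} {N jh j₀ : ℕ}
    (hg0 : ∀ j, 0 ≤ g j) (hg : ∀ j, g (j + 1) ≤ 3 / 4 * g j)
    (hb : Monotone b) (hb0 : 0 ≤ b j₀)
    (hd : ∀ j ≤ N, d j ≤ g j + b j)
    (hd_succ : ∀ j < N, d (j + 1) ≤ d j + e j)
    (he : ∀ j < N, e j ≤ d j + d (j + 1))
    (hstop : N ≤ jh ∨ 4 * g jh < e jh)
    (hmin : ∀ j < jh, j < N ∧ e j ≤ 4 * g j)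
    (hj₀ : j₀ ≤ N) :
    d jh ≤ 17 * g j₀ + 2 * b j₀ := by
  rcases lt_or_ge jh j₀ with hlt | hge
  · -- stopping early certifies that the bias already dominates the deviation
    have hjump : 4 * g jh < e jh := hstop.resolve_left (by omega)
    linarith [hd jh (by omega), hd (jh + 1) (by omega), hb (show jh ≤ j₀ by omega),
      hb (show jh + 1 ≤ j₀ by omega), hg jh, hg0 jh, hg0 j₀, he jh (by omega)]
  · have htele : d jh ≤ d j₀ + ∑ j ∈ Finset.Ico j₀ jh, e j :=
      le_add_sum_Ico_of_succ_le hge fun j hj =>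
        hd_succ j (hmin j (Finset.mem_Ico.1 hj).2).1
    have hsum : ∑ j ∈ Finset.Ico j₀ jh, e j ≤ 16 * g j₀ := by
      calc ∑ j ∈ Finset.Ico j₀ jh, e j ≤ ∑ j ∈ Finset.Ico j₀ jh, 4 * g j :=
            Finset.sum_le_sum fun j hj => (hmin j (Finset.mem_Ico.1 hj).2).2
        _ = 4 * ∑ j ∈ Finset.Ico j₀ jh, g j := (Finset.mul_sum ..).symm
        _ ≤ 4 * (g j₀ / (1 - 3 / 4)) := by
            gcongr; exact sum_Ico_le_div_one_sub (by norm_num) hg0 hg j₀ jh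
        _ = 16 * g j₀ := by ring
    linarith [hd j₀ hj₀]

lemma abs_empAvg_le {Z Ω : Type*} (Zs : ℕ → Ω → Z) (T r : ℕ) {f : Z → ℝ} {B : ℝ}
    (hf : ∀ z, |f z| ≤ B) (ω : Ω) : |empAvg Zs T r f ω| ≤ B := by
  have hB : 0 ≤ B := (abs_nonneg _).trans (hf (Zs 0 ω))
  have hcard : (Finset.Icc (T - r + 1) T).card ≤ r := by rw [Nat.card_Icc]; omega
  rw [empAvg, abs_mul, abs_inv, Nat.abs_cast]
  calc (r : ℝ)⁻¹ * |∑ t ∈ Finset.Icc (T - r + 1) T, f (Zs t ω)|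
      ≤ (r : ℝ)⁻¹ * ((Finset.Icc (T - r + 1) T).card • B) := by
        gcongr
        exact (Finset.abs_sum_le_sum_abs _ _).trans (Finset.sum_le_card_nsmul _ _ _ fun t _ => hf _)
    _ ≤ (r : ℝ)⁻¹ * (r * B) := by
        rw [nsmul_eq_mul]; gcongr
    _ ≤ B := by
        rcases Nat.eq_zero_or_pos r with rfl | hr
        · simpa using hB
        · rw [inv_mul_cancel_left₀ (by positivity)]

section Discrepancy

variable {ι Z Ω : Type*} [MeasurableSpace Z]

lemma bddAbove_range_abs_sub {a b : ι → ℝ} {B : ℝ} (ha : ∀ i, |a i| ≤ B) (hb : ∀ i, |b i| ≤ B) :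
    BddAbove (Set.range fun i => |a i - b i|) :=
  ⟨B + B, by rintro _ ⟨i, rfl⟩; exact (abs_sub _ _).trans (add_le_add (ha i) (hb i))⟩

lemma iSup_abs_sub_le_add [Nonempty ι] {a b c : ι → ℝ} {B : ℝ} (ha : ∀ i, |a i| ≤ B)
    (hb : ∀ i, |b i| ≤ B) (hc : ∀ i, |c i| ≤ B) :
    ⨆ i, |a i - c i| ≤ (⨆ i, |a i - b i|) + ⨆ i, |b i - c i| :=
  ciSup_le fun i => (abs_sub_le _ _ _).trans <| add_le_add
    (le_ciSup (bddAbove_range_abs_sub ha hb) i) (le_ciSup (bddAbove_range_abs_sub hb hc) i)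

lemma abs_integral_le_of_abs_le (Q : Measure Z) [IsProbabilityMeasure Q] {f : Z → ℝ} {B : ℝ}
    (hf : ∀ z, |f z| ≤ B) : |∫ z, f z ∂Q| ≤ B := by
  simpa using norm_integral_le_of_norm_le_const (μ := Q)
    (.of_forall fun z => (Real.norm_eq_abs (f z)).trans_le (hf z))

variable [Nonempty ι] {F : ι → Z → ℝ} {B : ℝ}

lemma dPE_le_dF_add_dPE (hF : ∀ n z, |F n z| ≤ B) (P Q : Measure Z) [IsProbabilityMeasure P]
    [IsProbabilityMeasure Q] (Zs : ℕ → Ω → Z) (T r : ℕ) (ω : Ω) :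
    dPE F P Zs T r ω ≤ dF F P Q + dPE F Q Zs T r ω :=
  iSup_abs_sub_le_add (fun n => abs_integral_le_of_abs_le P (hF n))
    (fun n => abs_integral_le_of_abs_le Q (hF n)) (fun n => abs_empAvg_le Zs T r (hF n) ω)

lemma dPE_le_dPE_add_dEE (hF : ∀ n z, |F n z| ≤ B) (P : Measure Z) [IsProbabilityMeasure P]
    (Zs : ℕ → Ω → Z) (T r s : ℕ) (ω : Ω) :
    dPE F P Zs T s ω ≤ dPE F P Zs T r ω + dEE F Zs T r s ω :=
  iSup_abs_sub_le_add (fun n => abs_integral_le_of_abs_le P (hF n))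
    (fun n => abs_empAvg_le Zs T r (hF n) ω) (fun n => abs_empAvg_le Zs T s (hF n) ω)

lemma dEE_le_dPE_add_dPE (hF : ∀ n z, |F n z| ≤ B) (P : Measure Z) [IsProbabilityMeasure P]
    (Zs : ℕ → Ω → Z) (T r s : ℕ) (ω : Ω) :
    dEE F Zs T r s ω ≤ dPE F P Zs T r ω + dPE F P Zs T s ω := by
  have h := iSup_abs_sub_le_add (fun n => abs_empAvg_le Zs T r (hF n) ω)
    (fun n => abs_integral_le_of_abs_le P (hF n)) (fun n => abs_empAvg_le Zs T s (hF n) ω)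
  rwa [iSup_congr fun n => abs_sub_comm (empAvg Zs T r (F n) ω) (∫ z, F n z ∂P)] at h

end Discrepancy

section Drift

variable {ι Z : Type*} [MeasurableSpace Z] {F : ι → Z → ℝ} {B : ℝ} {P : ℕ → Measure Z}

lemma card_Icc_sub_add_one {T r : ℕ} (hrT : r ≤ T) : (Finset.Icc (T - r + 1) T).card = r := by
  rw [Nat.card_Icc]; omega

lemma isProbabilityMeasure_avgMeas (hP : ∀ t, IsProbabilityMeasure (P t)) {T r : ℕ}
    (hr : 1 ≤ r) (hrT : r ≤ T) : IsProbabilityMeasure (avgMeas P T r) := by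
  constructor
  simp only [avgMeas, Measure.smul_apply, Measure.finsetSum_apply, measure_univ,
    Finset.sum_const, card_Icc_sub_add_one hrT, nsmul_eq_mul, mul_one, smul_eq_mul]
  exact ENNReal.inv_mul_cancel (by simp; omega) (by simp)

lemma integral_avgMeas (hP : ∀ t, IsProbabilityMeasure (P t)) (T r : ℕ) {f : Z → ℝ}
    (hfm : Measurable f) (hf : ∀ z, |f z| ≤ B) :
    ∫ z, f z ∂avgMeas P T r = (r : ℝ)⁻¹ * ∑ t ∈ Finset.Icc (T - r + 1) T, ∫ z, f z ∂P t := by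
  have hint : ∀ t, Integrable f (P t) := fun t =>
    .of_bound hfm.aestronglyMeasurable B (.of_forall fun z => (Real.norm_eq_abs _).trans_le (hf z))
  rw [avgMeas, integral_smul_measure, integral_finsetSum_measure fun t _ => hint t]
  simp [ENNReal.toReal_inv]

lemma maxDrift_nonneg (T r : ℕ) : 0 ≤ maxDrift F P T r :=
  Real.iSup_nonneg fun _ => Real.iSup_nonneg fun _ => abs_nonneg _

lemma dF_le_maxDrift {T r t : ℕ} (ht : T - t < r) (htT : t ≤ T) :
    dF F (P T) (P t) ≤ maxDrift F P T r := by
  have h := le_ciSup (f := fun u : Fin r => dF F (P T) (P (T - u))) (Set.finite_range _).bddAbove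
    ⟨T - t, ht⟩
  rwa [show T - (T - t) = t by omega] at h

lemma maxDrift_mono (T : ℕ) : Monotone (maxDrift F P T) := by
  intro r s hrs
  rcases Nat.eq_zero_or_pos r with rfl | hr
  · simp only [maxDrift, Real.iSup_of_isEmpty]
    exact maxDrift_nonneg T s
  have : Nonempty (Fin r) := ⟨⟨0, hr⟩⟩
  exact ciSup_le fun t => le_ciSup (f := fun u : Fin s => dF F (P T) (P (T - u)))
    (Set.finite_range _).bddAbove (Fin.castLE hrs t)

lemma dF_avgMeas_le_maxDrift [Nonempty ι] (hFm : ∀ n, Measurable (F n))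
    (hF : ∀ n z, |F n z| ≤ B) (hP : ∀ t, IsProbabilityMeasure (P t)) {T r : ℕ}
    (hr : 1 ≤ r) (hrT : r ≤ T) : dF F (P T) (avgMeas P T r) ≤ maxDrift F P T r := by
  refine ciSup_le fun n => ?_
  have hr0 : (0 : ℝ) < r := by exact_mod_cast hr
  have hcard := card_Icc_sub_add_one hrT
  have havg : (∫ z, F n z ∂P T) - ∫ z, F n z ∂avgMeas P T r
      = (r : ℝ)⁻¹ * ∑ t ∈ Finset.Icc (T - r + 1) T, ((∫ z, F n z ∂P T) - ∫ z, F n z ∂P t) := by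
    rw [integral_avgMeas hP T r (hFm n) (hF n), Finset.sum_sub_distrib, Finset.sum_const, hcard,
      nsmul_eq_mul]
    field_simp
  have hterm : ∀ t ∈ Finset.Icc (T - r + 1) T,
      |(∫ z, F n z ∂P T) - ∫ z, F n z ∂P t| ≤ maxDrift F P T r := fun t ht => by
    rw [Finset.mem_Icc] at ht
    exact (le_ciSup (bddAbove_range_abs_sub (fun n => abs_integral_le_of_abs_le (P T) (hF n))
      (fun n => abs_integral_le_of_abs_le (P t) (hF n))) n).trans
      (dF_le_maxDrift (by omega) ht.2)
  rw [havg, abs_mul, abs_inv, Nat.abs_cast, inv_mul_le_iff₀ hr0]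
  calc |∑ t ∈ Finset.Icc (T - r + 1) T, ((∫ z, F n z ∂P T) - ∫ z, F n z ∂P t)|
      ≤ (Finset.Icc (T - r + 1) T).card • maxDrift F P T r :=
        (Finset.abs_sum_le_sum_abs _ _).trans (Finset.sum_le_card_nsmul _ _ _ hterm)
    _ = r * maxDrift F P T r := by rw [hcard, nsmul_eq_mul]

end Drift

lemma measurable_dPE {ι Z Ω : Type*} [MeasurableSpace Z] [MeasurableSpace Ω] [Countable ι]
    {F : ι → Z → ℝ} (hFm : ∀ n, Measurable (F n)) (Q : Measure Z) {Zs : ℕ → Ω → Z}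
    (hZm : ∀ t, Measurable (Zs t)) (T r : ℕ) : Measurable (dPE F Q Zs T r) :=
  .iSup fun n => (measurable_const.sub <| (Finset.measurable_sum _ fun t _ =>
    (hFm n).comp (hZm t)).const_mul _).abs

lemma le_measure_biInter_of_le {ι Ω : Type*} [MeasurableSpace Ω] {μ : Measure Ω}
    [IsProbabilityMeasure μ] (s : Finset ι) {E : ι → Set Ω} {ε : ι → ℝ}
    (hE : ∀ i ∈ s, MeasurableSet (E i)) (hε : ∀ i ∈ s, 0 ≤ ε i)
    (h : ∀ i ∈ s, ENNReal.ofReal (1 - ε i) ≤ μ (E i)) :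
    ENNReal.ofReal (1 - ∑ i ∈ s, ε i) ≤ μ (⋂ i ∈ s, E i) := by
  have hcompl : ∀ i ∈ s, μ (E i)ᶜ ≤ ENNReal.ofReal (ε i) := fun i hi => by
    rw [prob_compl_eq_one_sub (hE i hi), tsub_le_iff_right]
    calc (1 : ENNReal) = ENNReal.ofReal (ε i + (1 - ε i)) := by simp
      _ ≤ ENNReal.ofReal (ε i) + μ (E i) := ENNReal.ofReal_add_le.trans (by gcongr; exact h i hi)
  have hunion : μ (⋃ i ∈ s, (E i)ᶜ) ≤ ENNReal.ofReal (∑ i ∈ s, ε i) := by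
    rw [ENNReal.ofReal_sum_of_nonneg hε]
    exact (measure_biUnion_finset_le s _).trans (Finset.sum_le_sum hcompl)
  rw [ENNReal.ofReal_sub _ (Finset.sum_nonneg hε), ENNReal.ofReal_one, tsub_le_iff_right]
  calc 1 = μ ((⋂ i ∈ s, E i) ∪ (⋂ i ∈ s, E i)ᶜ) := by rw [Set.union_compl_self, measure_univ]
    _ ≤ μ (⋂ i ∈ s, E i) + μ (⋃ i ∈ s, (E i)ᶜ) := by
        rw [Set.compl_iInter₂]; exact measure_union_le _ _
    _ ≤ μ (⋂ i ∈ s, E i) + ENNReal.ofReal (∑ i ∈ s, ε i) := by gcongr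

/-- Confidence level spent on the window `2^j`: the levels sum to at most `δ` because
`∑ 1/n² = π²/6`, and `log (1/δ_j)` is the sum of the two logarithms appearing in `Sfun`. -/
noncomputable def dyadicLevel (δ : ℝ) (j : ℕ) : ℝ := 6 * δ / (π ^ 2 * ((j : ℝ) + 10) ^ 2)

lemma dyadicLevel_pos {δ : ℝ} (hδ : 0 < δ) (j : ℕ) : 0 < dyadicLevel δ j := by
  unfold dyadicLevel; positivity

lemma dyadicLevel_lt_one {δ : ℝ} (hδ : δ < 1) (j : ℕ) : dyadicLevel δ j < 1 := by
  have hπ : 9 < π ^ 2 := by nlinarith [pi_gt_three]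
  have hj : (100 : ℝ) ≤ ((j : ℝ) + 10) ^ 2 := by nlinarith [j.cast_nonneg (α := ℝ)]
  rw [dyadicLevel, div_lt_one (by positivity)]
  nlinarith

lemma sum_dyadicLevel_le {δ : ℝ} (hδ : 0 < δ) (m : ℕ) :
    ∑ j ∈ Finset.range m, dyadicLevel δ j ≤ δ := by
  have hzeta : ∑ j ∈ Finset.range m, 1 / ((j : ℝ) + 10) ^ 2 ≤ π ^ 2 / 6 := by
    have h := sum_le_hasSum (Finset.Ico 10 (10 + m)) (fun n _ => by positivity) hasSum_zeta_two
    rw [Finset.sum_Ico_eq_sum_range] at h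
    simpa [add_comm] using h
  calc ∑ j ∈ Finset.range m, dyadicLevel δ j
      = 6 * δ / π ^ 2 * ∑ j ∈ Finset.range m, 1 / ((j : ℝ) + 10) ^ 2 := by
        rw [Finset.mul_sum]
        refine Finset.sum_congr rfl fun j _ => ?_
        rw [dyadicLevel]; field_simp
    _ ≤ 6 * δ / π ^ 2 * (π ^ 2 / 6) := by gcongr
    _ = δ := by field_simp

lemma log_inv_dyadicLevel {δ : ℝ} (hδ : 0 < δ) (j : ℕ) :
    log (1 / dyadicLevel δ j) = log (π ^ 2 / (6 * δ)) + 2 * log ((j : ℝ) + 10) := by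
  rw [dyadicLevel, one_div_div, mul_div_right_comm, log_mul (by positivity) (by positivity),
    log_pow, Nat.cast_ofNat]

lemma uniform_bound_dyadicLevel_le_Sfun {C1 C2 δ : ℝ} (hC2 : 0 ≤ C2)
    (hδ0 : 0 < δ) (hδ1 : δ < 1) (j : ℕ) :
    C1 / √((2 ^ j : ℕ) : ℝ) + C2 * √(log (1 / dyadicLevel δ j) / ((2 ^ j : ℕ) : ℝ))
      ≤ Sfun C1 C2 ((2 ^ j : ℕ) : ℝ) δ := by
  have ha : 0 ≤ log (π ^ 2 / (6 * δ)) :=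
    log_nonneg ((one_le_div (by positivity)).2 (by nlinarith [pi_gt_three]))
  have hb : 0 ≤ 2 * log ((j : ℝ) + 10) :=
    mul_nonneg zero_le_two (log_nonneg (by linarith [j.cast_nonneg (α := ℝ)]))
  have hsqrt : √(log (π ^ 2 / (6 * δ)) + 2 * log ((j : ℝ) + 10))
      ≤ √(2 * log (π ^ 2 / (6 * δ))) + √(2 * log ((j : ℝ) + 10)) :=
    sqrt_le_iff.2 ⟨by positivity, by
      nlinarith [sq_sqrt (mul_nonneg zero_le_two ha), sq_sqrt hb,
        mul_nonneg (sqrt_nonneg (2 * log (π ^ 2 / (6 * δ))))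
          (sqrt_nonneg (2 * log ((j : ℝ) + 10)))]⟩
  have hlogb : logb 2 ((2 ^ j : ℕ) : ℝ) = j := by
    rw [Nat.cast_pow, Nat.cast_ofNat, logb_pow, logb_self_eq_one one_lt_two, mul_one]
  rw [Sfun_eq _ _ _ (by positivity), hlogb, log_inv_dyadicLevel hδ0, sqrt_div' _ (by positivity),
    ← mul_div_assoc, ← add_div]
  refine div_le_div_of_nonneg_right ?_ (sqrt_nonneg _)
  nlinarith [mul_le_mul_of_nonneg_left hsqrt hC2]

lemma two_pow_le_iff_le_log {T j : ℕ} (hT : 1 ≤ T) : 2 ^ j ≤ T ↔ j ≤ Nat.log 2 T :=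
  (Nat.le_log_iff_pow_le one_lt_two (by omega)).symm

lemma stopCond_iff {ι Z Ω : Type*} {F : ι → Z → ℝ} {Zs : ℕ → Ω → Z} {T : ℕ} {C1 C2 δ : ℝ}
    (hT : 1 ≤ T) {j : ℕ} {ω : Ω} :
    stopCond F Zs T C1 C2 δ j ω ↔
      Nat.log 2 T ≤ j ∨
        4 * Sfun C1 C2 ((2 ^ j : ℕ) : ℝ) δ < dEE F Zs T (2 ^ j) (2 ^ (j + 1)) ω := by
  rw [stopCond, gt_iff_lt, gt_iff_lt, ← not_le, two_pow_le_iff_le_log hT, not_le, Nat.lt_succ_iff]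

section Adaptive

variable {ι Z Ω : Type*} [MeasurableSpace Z] {F : ι → Z → ℝ}
  {P : ℕ → Measure Z} {Zs : ℕ → Ω → Z} {T : ℕ} {C1 C2 δ : ℝ}

def concentrationEvent (F : ι → Z → ℝ) (P : ℕ → Measure Z) (Zs : ℕ → Ω → Z) (T : ℕ)
    (C1 C2 δ : ℝ) : Set Ω :=
  ⋂ j ∈ Finset.range (Nat.log 2 T + 1),
    {ω | dPE F (avgMeas P T (2 ^ j)) Zs T (2 ^ j) ω ≤ Sfun C1 C2 ((2 ^ j : ℕ) : ℝ) δ}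

lemma le_measure_concentrationEvent [MeasurableSpace Ω] [Countable ι] {μ : Measure Ω}
    [IsProbabilityMeasure μ] (hFm : ∀ n, Measurable (F n)) (hZm : ∀ t, Measurable (Zs t))
    (hT : 1 ≤ T) (hC2 : 0 ≤ C2)
    (hUC : ∀ r : ℕ, 1 ≤ r → r ≤ T → ∀ δ' : ℝ, 0 < δ' → δ' < 1 →
      ENNReal.ofReal (1 - δ') ≤ μ {ω | dPE F (avgMeas P T r) Zs T r ω ≤
        C1 / Real.sqrt r + C2 * Real.sqrt (Real.log (1 / δ') / r)})
    (hδ0 : 0 < δ) (hδ1 : δ < 1) :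
    ENNReal.ofReal (1 - δ) ≤ μ (concentrationEvent F P Zs T C1 C2 δ) := by
  have hpow : ∀ j ∈ Finset.range (Nat.log 2 T + 1), 2 ^ j ≤ T := fun j hj =>
    (two_pow_le_iff_le_log hT).2 (Nat.lt_succ_iff.1 (Finset.mem_range.1 hj))
  calc ENNReal.ofReal (1 - δ)
      ≤ ENNReal.ofReal (1 - ∑ j ∈ Finset.range (Nat.log 2 T + 1), dyadicLevel δ j) :=
        ENNReal.ofReal_le_ofReal (by linarith [sum_dyadicLevel_le hδ0 (Nat.log 2 T + 1)])
    _ ≤ μ (concentrationEvent F P Zs T C1 C2 δ) :=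
        le_measure_biInter_of_le _
          (fun j _ => measurableSet_le (measurable_dPE hFm _ hZm T _) measurable_const)
          (fun j _ => (dyadicLevel_pos hδ0 j).le)
          (fun j hj => (hUC _ Nat.one_le_two_pow (hpow j hj) _ (dyadicLevel_pos hδ0 j)
            (dyadicLevel_lt_one hδ1 j)).trans <| measure_mono fun ω hω =>
              le_trans hω (uniform_bound_dyadicLevel_le_Sfun hC2 hδ0 hδ1 j))

lemma dPE_two_pow_le_of_mem_concentrationEvent [Nonempty ι] (hFm : ∀ n, Measurable (F n))
    {B : ℝ} (hF : ∀ n z, |F n z| ≤ B) (hP : ∀ t, IsProbabilityMeasure (P t)) (hT : 1 ≤ T)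
    {ω : Ω} (hω : ω ∈ concentrationEvent F P Zs T C1 C2 δ) {j : ℕ} (hj : j ≤ Nat.log 2 T) :
    dPE F (P T) Zs T (2 ^ j) ω ≤ Sfun C1 C2 ((2 ^ j : ℕ) : ℝ) δ + maxDrift F P T (2 ^ j) := by
  have := hP T
  have hjT := (two_pow_le_iff_le_log hT).2 hj
  have := isProbabilityMeasure_avgMeas hP Nat.one_le_two_pow hjT
  have hconc := Set.mem_iInter₂.1 hω j (Finset.mem_range.2 (Nat.lt_succ_of_le hj))
  linarith [dPE_le_dF_add_dPE hF (P T) (avgMeas P T (2 ^ j)) Zs T (2 ^ j) ω,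
    dF_avgMeas_le_maxDrift hFm hF hP Nat.one_le_two_pow hjT, hconc.out]

lemma dPE_le_of_mem_concentrationEvent [Nonempty ι] (hFm : ∀ n, Measurable (F n)) {B : ℝ}
    (hF : ∀ n z, |F n z| ≤ B) (hP : ∀ t, IsProbabilityMeasure (P t))
    (hC1 : 0 ≤ C1) (hC2 : 0 ≤ C2) {ω : Ω} (hω : ω ∈ concentrationEvent F P Zs T C1 C2 δ)
    {jh : ℕ} (hstop : stopCond F Zs T C1 C2 δ jh ω)
    (hmin : ∀ j < jh, ¬ stopCond F Zs T C1 C2 δ j ω) {r : ℕ} (hr : 1 ≤ r) (hrT : r ≤ T) :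
    dPE F (P T) Zs T (2 ^ jh) ω ≤ 34 * Sfun C1 C2 r δ + 2 * maxDrift F P T r := by
  have hT : 1 ≤ T := hr.trans hrT
  have := hP T
  set j₀ := Nat.log 2 r
  have hj₀r : 2 ^ j₀ ≤ r := Nat.pow_log_le_self 2 (by omega)
  have hrj₀ : r < 2 ^ (j₀ + 1) := Nat.lt_pow_succ_log_self one_lt_two r
  have hbound := le_of_doubling_stop (N := Nat.log 2 T) (j₀ := j₀)
    (d := fun j => dPE F (P T) Zs T (2 ^ j) ω) (e := fun j => dEE F Zs T (2 ^ j) (2 ^ (j + 1)) ω)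
    (g := fun j => Sfun C1 C2 ((2 ^ j : ℕ) : ℝ) δ) (b := fun j => maxDrift F P T (2 ^ j))
    (fun j => Sfun_nonneg hC1 hC2 _ δ)
    (fun j => by
      simp only [pow_succ', Nat.cast_mul, Nat.cast_ofNat]
      exact Sfun_two_mul_le hC1 hC2 δ (by exact_mod_cast Nat.one_le_two_pow))
    ((maxDrift_mono T).comp (pow_right_mono₀ one_le_two))
    (maxDrift_nonneg T _)
    (fun j hj => dPE_two_pow_le_of_mem_concentrationEvent hFm hF hP hT hω hj)
    (fun j _ => dPE_le_dPE_add_dEE hF (P T) Zs T _ _ ω)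
    (fun j _ => dEE_le_dPE_add_dPE hF (P T) Zs T _ _ ω)
    ((stopCond_iff hT).1 hstop)
    (fun j hj => by simpa only [not_or, not_le, not_lt] using (stopCond_iff hT).not.1 (hmin j hj))
    (Nat.log_mono_right hrT)
  have hS : Sfun C1 C2 ((2 ^ j₀ : ℕ) : ℝ) δ ≤ 2 * Sfun C1 C2 r δ :=
    Sfun_le_two_mul_Sfun hC1 hC2 δ (by exact_mod_cast Nat.one_le_two_pow)
      (by exact_mod_cast hj₀r)
      (by rw [pow_succ] at hrj₀; exact_mod_cast (by omega : r ≤ 4 * 2 ^ j₀))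
  have hD : maxDrift F P T (2 ^ j₀) ≤ maxDrift F P T r := maxDrift_mono T hj₀r
  linarith

end Adaptive

theorem stmt6_general {Z Ω : Type*} [mZ : MeasurableSpace Z] [MeasurableSpace Ω]
    (μ : Measure Ω) [IsProbabilityMeasure μ]
    (F : ℕ → Z → ℝ) (hFmeas : ∀ n, Measurable (F n))
    (B : ℝ) (hFbdd : ∀ n z, |F n z| ≤ B)
    (T : ℕ) (hT : 1 ≤ T) (P : ℕ → Measure Z)
    (hP : ∀ t, IsProbabilityMeasure (P t))
    (Zs : ℕ → Ω → Z) (hZmeas : ∀ t, Measurable (Zs t))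
    (C1 C2 : ℝ) (hC1 : 0 ≤ C1) (hC2 : 0 ≤ C2)
    (hUC : ∀ r : ℕ, 1 ≤ r → r ≤ T → ∀ δ' : ℝ, 0 < δ' → δ' < 1 →
      ENNReal.ofReal (1 - δ') ≤ μ {ω | dPE F (avgMeas P T r) Zs T r ω ≤
        C1 / Real.sqrt r + C2 * Real.sqrt (Real.log (1 / δ') / r)})
    (δ : ℝ) (hδ0 : 0 < δ) (hδ1 : δ < 1)
    (jhat : Ω → ℕ)
    (hjhat : ∀ ω, stopCond F Zs T C1 C2 δ (jhat ω) ω ∧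
      ∀ j < jhat ω, ¬ stopCond F Zs T C1 C2 δ j ω) :
    ENNReal.ofReal (1 - δ) ≤
      μ {ω | dPE F (P T) Zs T (2 ^ jhat ω) ω ≤
        22 * (Finset.Icc 1 T).inf' (Finset.nonempty_Icc.mpr hT)
          (fun r => 21 * Sfun C1 C2 (r : ℕ) δ + maxDrift F P T r)} := by
  refine (le_measure_concentrationEvent hFmeas hZmeas hT hC2 hUC hδ0 hδ1).trans
    (measure_mono fun ω hω => ?_)
  rw [Set.mem_ofPred_eq, ← div_le_iff₀' (by norm_num)]
  refine Finset.le_inf' _ _ fun r hr => ?_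
  obtain ⟨hr1, hrT⟩ := Finset.mem_Icc.1 hr
  have h := dPE_le_of_mem_concentrationEvent hFmeas hFbdd hP hC1 hC2 hω (hjhat ω).1 (hjhat ω).2
    hr1 hrT
  rw [div_le_iff₀' (by norm_num)]
  linarith [Sfun_nonneg hC1 hC2 r δ, maxDrift_nonneg (F := F) (P := P) T r]

/-- main adaptive guarantee. If `ĵ(ω)` is the least `j` at which the
algorithm stops and `r̂ = 2^ĵ`, then with probability at least `1 − δ`,
`‖P_T − 𝔔_T^{r̂}‖_F ≤ 22·min_{1 ≤ r ≤ T}(21·S(r,δ) + max_{0 ≤ t ≤ r−1}‖P_T − P_{T−t}‖_F)`. -/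
theorem stmt6 {Z Ω : Type*} [mZ : MeasurableSpace Z] [MeasurableSpace Ω]
    (μ : Measure Ω) [IsProbabilityMeasure μ]
    (F : ℕ → Z → ℝ) (hFmeas : ∀ n, Measurable (F n))
    (B : ℝ) (hFbdd : ∀ n z, |F n z| ≤ B)
    (T : ℕ) (hT : 1 ≤ T) (P : ℕ → Measure Z)
    (hP : ∀ t, IsProbabilityMeasure (P t))
    (Zs : ℕ → Ω → Z) (hZmeas : ∀ t, Measurable (Zs t))
    (hindep : iIndepFun Zs μ)
    (hdist : ∀ t ∈ Finset.Icc 1 T, μ.map (Zs t) = P t)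
    (C1 C2 : ℝ) (hC1 : 0 ≤ C1) (hC2 : 0 ≤ C2)
    (hUC : ∀ r : ℕ, 1 ≤ r → r ≤ T → ∀ δ' : ℝ, 0 < δ' → δ' < 1 →
      ENNReal.ofReal (1 - δ') ≤ μ {ω | dPE F (avgMeas P T r) Zs T r ω ≤
        C1 / Real.sqrt r + C2 * Real.sqrt (Real.log (1 / δ') / r)})
    (δ : ℝ) (hδ0 : 0 < δ) (hδ1 : δ < 1)
    (jhat : Ω → ℕ)
    (hjhat : ∀ ω, stopCond F Zs T C1 C2 δ (jhat ω) ω ∧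
      ∀ j < jhat ω, ¬ stopCond F Zs T C1 C2 δ j ω) :
    ENNReal.ofReal (1 - δ) ≤
      μ {ω | dPE F (P T) Zs T (2 ^ jhat ω) ω ≤
        22 * (Finset.Icc 1 T).inf' (Finset.nonempty_Icc.mpr hT)
          (fun r => 21 * Sfun C1 C2 (r : ℕ) δ + maxDrift F P T r)} :=
  stmt6_general (mZ := mZ) μ F hFmeas B hFbdd T hT P hP Zs hZmeas C1 C2 hC1 hC2 hUC δ hδ0 hδ1 jhat
    hjhat
end

section
/- Fix δ ∈ (0,1) and assume the family F = {L_h : h ∈ H} satisfies the uniform convergence assumption with constants C1, C2. Let r̂ = 2^ĵ, where ĵ is the least integer j ≥ 0 such that either 2^{j+1} > T or ‖𝔔_T^{2^j} − 𝔔_T^{2^{j+1}}‖_F > 4·S(2^j, δ). Suppose ĥ ∈ H attains the minimum of the empirical risk 𝔔_T^{r̂}(L_h) over h ∈ H, and h* ∈ H attains the minimum of P_T(L_h) over h ∈ H. Then with probability at least 1 − δ, P_T(L_ĥ) − P_T(L_{h*}) ≤ 44 · min_{1 ≤ r ≤ T} ( 21·S(r, δ) + max_{0 ≤ t ≤ r−1}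 ‖P_T − P_{T−t}‖_F ). -/
open MeasureTheory ProbabilityTheory

/-- The zero-one loss `L_h(x, y) = 1` if `y ≠ h(x)` and `0` otherwise. -/
noncomputable def lossB {X : Type*} (h : X → Bool) (z : X × Bool) : ℝ :=
  if z.2 = h z.1 then 0 else 1

/-- The family `F = {L_h : h ∈ H}` for a countable class `H`. -/
noncomputable def FB {X : Type*} (H : ℕ → X → Bool) : ℕ → (X × Bool) → ℝ :=
  fun n => lossB (H n)

section AutoProofHelpers
open Real
set_option linter.unusedSectionVars false
set_option linter.unusedVariables false

section Helpers
variable {X : Type*} [MeasurableSpace X]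

theorem lossB_nonneg {h : X → Bool} (z : X × Bool) : 0 ≤ lossB h z := by
  unfold lossB; split_ifs <;> norm_num

theorem lossB_le_one {h : X → Bool} (z : X × Bool) : lossB h z ≤ 1 := by
  unfold lossB; split_ifs <;> norm_num

theorem measurable_lossB {h : X → Bool} (hh : Measurable h) : Measurable (lossB h) := by
  unfold lossB
  have : Measurable (fun z : X × Bool => (z.2, h z.1)) :=
    measurable_snd.prodMk (hh.comp measurable_fst)
  have hset : MeasurableSet {z : X × Bool | z.2 = h z.1} := by
    have : {z : X × Bool | z.2 = h z.1} =
        (fun z : X × Bool => (z.2, h z.1)) ⁻¹' {p : Bool × Bool | p.1 = p.2} := rfl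
    rw [this]
    exact this ▸ (MeasurableSet.of_discrete (s := {p : Bool × Bool | p.1 = p.2})).preimage
      (measurable_snd.prodMk (hh.comp measurable_fst))
  exact Measurable.ite hset measurable_const measurable_const

theorem integrable_lossB {h : X → Bool} (hh : Measurable h) (ν : Measure (X × Bool))
    [IsFiniteMeasure ν] : Integrable (lossB h) ν := by
  refine (integrable_const (1 : ℝ)).mono' (measurable_lossB hh).aestronglyMeasurable ?_
  filter_upwards with z
  rw [Real.norm_eq_abs, abs_of_nonneg (lossB_nonneg z)]
  exact lossB_le_one z

theorem abs_integral_lossB_le_one {h : X → Bool} (hh : Measurable h)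
    (ν : Measure (X × Bool)) [IsProbabilityMeasure ν] : |∫ z, lossB h z ∂ν| ≤ 1 := by
  have := norm_integral_le_of_norm_le_const (μ := ν) (f := lossB h) (C := 1) ?_
  · simpa [Real.norm_eq_abs] using this
  · filter_upwards with z
    rw [Real.norm_eq_abs, abs_of_nonneg (lossB_nonneg z)]
    exact lossB_le_one z

theorem abs_empAvg_lossB_le_one {Ω : Type*} {h : X → Bool} (Zs : ℕ → Ω → X × Bool)
    (T r : ℕ) (ω : Ω) : |empAvg Zs T r (lossB h) ω| ≤ 1 := by
  unfold empAvg
  rcases Nat.eq_zero_or_pos r with hr | hr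
  · simp [hr]
  have h1 : 0 ≤ ∑ t ∈ Finset.Icc (T - r + 1) T, lossB h (Zs t ω) :=
    Finset.sum_nonneg fun t _ => lossB_nonneg _
  have h2 : ∑ t ∈ Finset.Icc (T - r + 1) T, lossB h (Zs t ω) ≤ (r : ℝ) := by
    calc ∑ t ∈ Finset.Icc (T - r + 1) T, lossB h (Zs t ω)
        ≤ ∑ t ∈ Finset.Icc (T - r + 1) T, 1 := Finset.sum_le_sum fun t _ => lossB_le_one _
      _ = ((Finset.Icc (T - r + 1) T).card : ℝ) := by simp
      _ ≤ (r : ℝ) := by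
          have : (Finset.Icc (T - r + 1) T).card ≤ r := by
            rw [Nat.card_Icc]; omega
          exact_mod_cast this
  rw [abs_of_nonneg (by positivity)]
  calc (r : ℝ)⁻¹ * ∑ t ∈ Finset.Icc (T - r + 1) T, lossB h (Zs t ω)
      ≤ (r : ℝ)⁻¹ * (r : ℝ) := by
        have : (0:ℝ) ≤ (r:ℝ)⁻¹ := by positivity
        exact mul_le_mul_of_nonneg_left h2 this
    _ = 1 := inv_mul_cancel₀ (by exact_mod_cast hr.ne')

-- generic sup lemmas
theorem le_mySup {u : ℕ → ℝ} {c : ℝ} (h : ∀ n, u n ≤ c) (m : ℕ) : u m ≤ ⨆ n, u n :=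
  le_ciSup ⟨c, by rintro x ⟨n, rfl⟩; exact h n⟩ m

theorem mySup_nonneg {a b : ℕ → ℝ} (ha : ∀ n, |a n| ≤ 1) (hb : ∀ n, |b n| ≤ 1) :
    0 ≤ ⨆ n, |a n - b n| := by
  refine le_trans (abs_nonneg (a 0 - b 0)) (le_mySup (u := fun n => |a n - b n|) (c := 2) (fun n => ?_) 0)
  calc |a n - b n| ≤ |a n| + |b n| := abs_sub _ _
    _ ≤ 2 := by linarith [ha n, hb n]

theorem mySup_triangle {a b c : ℕ → ℝ} (ha : ∀ n, |a n| ≤ 1) (hb : ∀ n, |b n| ≤ 1)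
    (hc : ∀ n, |c n| ≤ 1) :
    (⨆ n, |a n - c n|) ≤ (⨆ n, |a n - b n|) + ⨆ n, |b n - c n| := by
  refine ciSup_le fun n => ?_
  calc |a n - c n| ≤ |a n - b n| + |b n - c n| := abs_sub_le _ _ _
    _ ≤ (⨆ n, |a n - b n|) + ⨆ n, |b n - c n| := by
        gcongr
        · exact le_mySup (u := fun m => |a m - b m|) (c := 2) (fun m => by
            calc |a m - b m| ≤ |a m| + |b m| := abs_sub _ _
              _ ≤ 2 := by linarith [ha m, hb m]) n
        · exact le_mySup (u := fun m => |b m - c m|) (c := 2) (fun m => by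
            calc |b m - c m| ≤ |b m| + |c m| := abs_sub _ _
              _ ≤ 2 := by linarith [hb m, hc m]) n

theorem mySup_le_of_forall {a b : ℕ → ℝ} {c : ℝ} (h : ∀ n, |a n - b n| ≤ c) :
    (⨆ n, |a n - b n|) ≤ c := ciSup_le h

end Helpers

theorem log_ten_ge_two : (2:ℝ) ≤ Real.log 10 := by
  rw [Real.le_log_iff_exp_le (by norm_num)]
  have h := Real.exp_one_lt_d9
  have h2 : Real.exp 2 = Real.exp 1 * Real.exp 1 := by
    rw [← Real.exp_add]; norm_num
  nlinarith [Real.exp_pos 1]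

theorem A_nonneg {C1 C2 δ : ℝ} (hC1 : 0 ≤ C1) (hC2 : 0 ≤ C2) :
    0 ≤ C1 + C2 * Real.sqrt (2 * Real.log (Real.pi ^ 2 / (6 * δ))) := by
  have := Real.sqrt_nonneg (2 * Real.log (Real.pi ^ 2 / (6 * δ)))
  nlinarith

theorem logA_nonneg {δ : ℝ} (hδ0 : 0 < δ) (hδ1 : δ < 1) :
    0 ≤ Real.log (Real.pi ^ 2 / (6 * δ)) := by
  apply Real.log_nonneg
  rw [le_div_iff₀ (by positivity)]
  nlinarith [Real.pi_gt_three]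

theorem logb_two_pow (j : ℕ) : Real.logb 2 ((2:ℝ) ^ j) = (j : ℝ) := by
  have hl2 : Real.log 2 ≠ 0 := ne_of_gt (Real.log_pos one_lt_two)
  rw [Real.logb, Real.log_pow, mul_div_assoc, div_self hl2, mul_one]

theorem Sfun_pow_eq (C1 C2 δ : ℝ) (j : ℕ) : Sfun C1 C2 ((2 ^ j : ℕ) : ℝ) δ =
    (C1 + C2 * Real.sqrt (2 * Real.log (Real.pi ^ 2 / (6 * δ)))) / Real.sqrt ((2:ℝ) ^ j)
      + C2 * Real.sqrt (2 * Real.log ((j:ℝ) + 10) / (2:ℝ) ^ j) := by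
  have h1 : ((2 ^ j : ℕ) : ℝ) = (2:ℝ) ^ j := by push_cast; ring
  rw [Sfun, h1, logb_two_pow]

theorem log_ge_two (j : ℕ) : (2:ℝ) ≤ Real.log ((j:ℝ) + 10) :=
  le_trans log_ten_ge_two
    (Real.log_le_log (by norm_num) (by linarith [Nat.cast_nonneg (α := ℝ) j]))

theorem log_step (j : ℕ) : Real.log ((j:ℝ) + 1 + 10) ≤ (9/8) * Real.log ((j:ℝ) + 10) := by
  have hj : (0:ℝ) ≤ (j:ℝ) := Nat.cast_nonneg j
  have h10 : (0:ℝ) < (j:ℝ) + 10 := by linarith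
  have h11 : (0:ℝ) < (j:ℝ) + 1 + 10 := by linarith
  have hdiv : Real.log (((j:ℝ) + 1 + 10) / ((j:ℝ) + 10)) ≤ 1/10 := by
    refine le_trans (Real.log_le_sub_one_of_pos (by positivity)) ?_
    rw [div_sub_one h10.ne', div_le_div_iff₀ h10 (by norm_num)]
    ring_nf; linarith
  have heq : Real.log (((j:ℝ) + 1 + 10) / ((j:ℝ) + 10)) =
      Real.log ((j:ℝ) + 1 + 10) - Real.log ((j:ℝ) + 10) :=
    Real.log_div h11.ne' h10.ne'
  have h2 := log_ge_two j
  rw [heq] at hdiv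
  linarith

theorem Sfun_pow_nonneg {C1 C2 δ : ℝ} (hC1 : 0 ≤ C1) (hC2 : 0 ≤ C2) (j : ℕ) :
    0 ≤ Sfun C1 C2 ((2 ^ j : ℕ) : ℝ) δ := by
  rw [Sfun_pow_eq]
  have hA := A_nonneg (δ := δ) hC1 hC2
  positivity

theorem Sfun_nat_nonneg {C1 C2 δ : ℝ} (hC1 : 0 ≤ C1) (hC2 : 0 ≤ C2) (r : ℕ) :
    0 ≤ Sfun C1 C2 (r : ℝ) δ := by
  rw [Sfun]
  have hA := A_nonneg (δ := δ) hC1 hC2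
  positivity

theorem Sfun_step {C1 C2 δ : ℝ} (hC1 : 0 ≤ C1) (hC2 : 0 ≤ C2) (j : ℕ) :
    Sfun C1 C2 ((2 ^ (j+1) : ℕ) : ℝ) δ ≤ (3/4) * Sfun C1 C2 ((2 ^ j : ℕ) : ℝ) δ := by
  rw [Sfun_pow_eq, Sfun_pow_eq]
  push_cast
  set A := C1 + C2 * Real.sqrt (2 * Real.log (Real.pi ^ 2 / (6 * δ))) with hAdef
  have hA : 0 ≤ A := A_nonneg hC1 hC2
  have hp : (0:ℝ) < (2:ℝ) ^ j := by positivity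
  have hs : (0:ℝ) < Real.sqrt ((2:ℝ) ^ j) := Real.sqrt_pos.mpr hp
  have hsq2 : Real.sqrt ((2:ℝ) ^ (j+1)) = Real.sqrt 2 * Real.sqrt ((2:ℝ) ^ j) := by
    rw [pow_succ, mul_comm, ← Real.sqrt_mul (by norm_num)]
  have h43 : (4:ℝ)/3 ≤ Real.sqrt 2 := by
    nlinarith [Real.sq_sqrt (by norm_num : (0:ℝ) ≤ 2), Real.sqrt_nonneg 2]
  have hinv : (Real.sqrt 2)⁻¹ ≤ 3/4 := by
    rw [inv_le_comm₀ (by positivity) (by norm_num)]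
    linarith
  have t1 : A / Real.sqrt ((2:ℝ) ^ (j+1)) ≤ (3/4) * (A / Real.sqrt ((2:ℝ) ^ j)) := by
    rw [hsq2, mul_comm (Real.sqrt 2), ← div_div, div_eq_mul_inv (A / Real.sqrt ((2:ℝ)^j))]
    calc A / Real.sqrt ((2:ℝ)^j) * (Real.sqrt 2)⁻¹
        ≤ A / Real.sqrt ((2:ℝ)^j) * (3/4) :=
          mul_le_mul_of_nonneg_left hinv (div_nonneg hA hs.le)
      _ = (3/4) * (A / Real.sqrt ((2:ℝ)^j)) := by ring
  have t2 : C2 * Real.sqrt (2 * Real.log ((j:ℝ) + 1 + 10) / (2:ℝ) ^ (j+1)) ≤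
      (3/4) * (C2 * Real.sqrt (2 * Real.log ((j:ℝ) + 10) / (2:ℝ) ^ j)) := by
    have hls := log_step j
    have h2l := log_ge_two j
    have harg : 2 * Real.log ((j:ℝ) + 1 + 10) / (2:ℝ) ^ (j+1) ≤
        (9/16) * (2 * Real.log ((j:ℝ) + 10) / (2:ℝ) ^ j) := by
      rw [pow_succ, show (9:ℝ)/16 * (2 * Real.log ((j:ℝ) + 10) / (2:ℝ) ^ j)
        = 2 * ((9/8) * Real.log ((j:ℝ) + 10)) / ((2:ℝ) ^ j * 2) by ring]
      gcongr
    calc C2 * Real.sqrt (2 * Real.log ((j:ℝ) + 1 + 10) / (2:ℝ) ^ (j+1))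
        ≤ C2 * Real.sqrt ((9/16) * (2 * Real.log ((j:ℝ) + 10) / (2:ℝ) ^ j)) :=
          mul_le_mul_of_nonneg_left (Real.sqrt_le_sqrt harg) hC2
      _ = (3/4) * (C2 * Real.sqrt (2 * Real.log ((j:ℝ) + 10) / (2:ℝ) ^ j)) := by
          rw [Real.sqrt_mul (by norm_num), show Real.sqrt (9/16) = 3/4 by
            rw [show (9:ℝ)/16 = (3/4)^2 by norm_num, Real.sqrt_sq (by norm_num)]]
          ring
  linarith

theorem Sfun_geo {C1 C2 δ : ℝ} (hC1 : 0 ≤ C1) (hC2 : 0 ≤ C2) (j k : ℕ) :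
    Sfun C1 C2 ((2 ^ (j+k) : ℕ) : ℝ) δ ≤ (3/4)^k * Sfun C1 C2 ((2 ^ j : ℕ) : ℝ) δ := by
  induction k with
  | zero => simp
  | succ k ih =>
    have hstep := Sfun_step (δ := δ) hC1 hC2 (j + k)
    have h34 : (0:ℝ) ≤ (3/4:ℝ)^k := by positivity
    calc Sfun C1 C2 ((2 ^ (j+(k+1)) : ℕ) : ℝ) δ
        = Sfun C1 C2 ((2 ^ ((j+k)+1) : ℕ) : ℝ) δ := rfl
      _ ≤ (3/4) * Sfun C1 C2 ((2 ^ (j+k) : ℕ) : ℝ) δ := hstep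
      _ ≤ (3/4) * ((3/4)^k * Sfun C1 C2 ((2 ^ j : ℕ) : ℝ) δ) := by linarith
      _ = (3/4)^(k+1) * Sfun C1 C2 ((2 ^ j : ℕ) : ℝ) δ := by ring

theorem Sfun_sum {C1 C2 δ : ℝ} (hC1 : 0 ≤ C1) (hC2 : 0 ≤ C2) (j m : ℕ) :
    ∑ i ∈ Finset.Ico j m, Sfun C1 C2 ((2 ^ i : ℕ) : ℝ) δ ≤
      4 * Sfun C1 C2 ((2 ^ j : ℕ) : ℝ) δ := by
  have hS0 := Sfun_pow_nonneg (δ := δ) hC1 hC2 j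
  calc ∑ i ∈ Finset.Ico j m, Sfun C1 C2 ((2 ^ i : ℕ) : ℝ) δ
      = ∑ k ∈ Finset.range (m - j), Sfun C1 C2 ((2 ^ (j + k) : ℕ) : ℝ) δ :=
        Finset.sum_Ico_eq_sum_range _ j m
    _ ≤ ∑ k ∈ Finset.range (m - j), (3/4)^k * Sfun C1 C2 ((2 ^ j : ℕ) : ℝ) δ :=
        Finset.sum_le_sum fun k _ => Sfun_geo hC1 hC2 j k
    _ = (∑ k ∈ Finset.range (m - j), (3/4:ℝ)^k) * Sfun C1 C2 ((2 ^ j : ℕ) : ℝ) δ := by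
        rw [Finset.sum_mul]
    _ ≤ 4 * Sfun C1 C2 ((2 ^ j : ℕ) : ℝ) δ := by
        have hgeom : (∑ k ∈ Finset.range (m - j), (3/4:ℝ)^k) ≤ 4 := by
          rw [geom_sum_eq (by norm_num : (3/4:ℝ) ≠ 1) (m - j),
            div_le_iff_of_neg (by norm_num : (3/4:ℝ) - 1 < 0)]
          have hp : (0:ℝ) < (3/4:ℝ)^(m-j) := by positivity
          linarith
        nlinarith

theorem Sfun_half {C1 C2 δ : ℝ} (hC1 : 0 ≤ C1) (hC2 : 0 ≤ C2) (j r : ℕ)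
    (h1 : 2 ^ j ≤ r) (h2 : r ≤ 2 ^ (j+1)) :
    Sfun C1 C2 ((2 ^ j : ℕ) : ℝ) δ ≤ 2 * Sfun C1 C2 (r : ℝ) δ := by
  have hr1 : 1 ≤ r := le_trans (Nat.one_le_two_pow) h1
  have hpj : ((2:ℝ)) ^ j ≤ (r:ℝ) := by exact_mod_cast h1
  have hrle : (r:ℝ) ≤ 2 * (2:ℝ) ^ j := by
    have : (r:ℝ) ≤ ((2:ℕ):ℝ) ^ (j+1) := by exact_mod_cast h2
    rw [pow_succ] at this; push_cast at this; linarith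
  rw [Sfun_pow_eq, Sfun]
  set A := C1 + C2 * Real.sqrt (2 * Real.log (Real.pi ^ 2 / (6 * δ))) with hAdef
  have hA : 0 ≤ A := A_nonneg hC1 hC2
  have hp : (0:ℝ) < (2:ℝ) ^ j := by positivity
  have hs : (0:ℝ) < Real.sqrt ((2:ℝ) ^ j) := Real.sqrt_pos.mpr hp
  have hrpos : (0:ℝ) < (r:ℝ) := lt_of_lt_of_le hp hpj
  have hsr : (0:ℝ) < Real.sqrt (r:ℝ) := Real.sqrt_pos.mpr hrpos
  have hsrle : Real.sqrt (r:ℝ) ≤ 2 * Real.sqrt ((2:ℝ) ^ j) := by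
    calc Real.sqrt (r:ℝ) ≤ Real.sqrt (2 * (2:ℝ) ^ j) := Real.sqrt_le_sqrt hrle
      _ = Real.sqrt 2 * Real.sqrt ((2:ℝ) ^ j) := Real.sqrt_mul (by norm_num) _
      _ ≤ 2 * Real.sqrt ((2:ℝ) ^ j) := by
          have h22 : Real.sqrt 2 ≤ 2 := by
            nlinarith [Real.sq_sqrt (by norm_num : (0:ℝ) ≤ 2), Real.sqrt_nonneg 2]
          nlinarith
  have t1 : A / Real.sqrt ((2:ℝ) ^ j) ≤ 2 * (A / Real.sqrt (r:ℝ)) := by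
    have hkey := div_le_div_of_nonneg_left (c := Real.sqrt (r:ℝ))
      (b := 2 * Real.sqrt ((2:ℝ)^j)) (by linarith : (0:ℝ) ≤ 2*A) hsr hsrle
    calc A / Real.sqrt ((2:ℝ) ^ j) = (2*A) / (2 * Real.sqrt ((2:ℝ) ^ j)) := by
          rw [mul_div_mul_left A (Real.sqrt ((2:ℝ)^j)) (by norm_num : (2:ℝ) ≠ 0)]
      _ ≤ (2*A) / Real.sqrt (r:ℝ) := hkey
      _ = 2 * (A / Real.sqrt (r:ℝ)) := by ring
  have hlogb : (j:ℝ) ≤ Real.logb 2 (r:ℝ) := by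
    have hmono : Real.logb 2 ((2:ℝ)^j) ≤ Real.logb 2 (r:ℝ) :=
      (Real.logb_le_logb (by norm_num) hp hrpos).mpr hpj
    rwa [logb_two_pow] at hmono
  have hlog : Real.log ((j:ℝ) + 10) ≤ Real.log (Real.logb 2 (r:ℝ) + 10) :=
    Real.log_le_log (by positivity) (by linarith)
  have hlogpos : (0:ℝ) ≤ Real.log (Real.logb 2 (r:ℝ) + 10) :=
    le_trans (le_trans (by norm_num) (log_ge_two j)) hlog
  have t2 : C2 * Real.sqrt (2 * Real.log ((j:ℝ) + 10) / (2:ℝ) ^ j) ≤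
      2 * (C2 * Real.sqrt (2 * Real.log (Real.logb 2 (r:ℝ) + 10) / (r:ℝ))) := by
    have harg : 2 * Real.log ((j:ℝ) + 10) / (2:ℝ) ^ j ≤
        4 * (2 * Real.log (Real.logb 2 (r:ℝ) + 10) / (r:ℝ)) := by
      rw [div_le_iff₀ hp, show (4:ℝ) * (2 * Real.log (Real.logb 2 (r:ℝ) + 10) / (r:ℝ)) * (2:ℝ)^j
        = 8 * Real.log (Real.logb 2 (r:ℝ) + 10) * ((2:ℝ)^j / (r:ℝ)) by ring]
      have hfrac : (1:ℝ)/2 ≤ (2:ℝ)^j / (r:ℝ) := by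
        rw [le_div_iff₀ hrpos]; linarith
      have hLj : Real.log ((j:ℝ) + 10) ≤ Real.log (Real.logb 2 (r:ℝ) + 10) := hlog
      nlinarith [log_ge_two j]
    calc C2 * Real.sqrt (2 * Real.log ((j:ℝ) + 10) / (2:ℝ) ^ j)
        ≤ C2 * Real.sqrt (4 * (2 * Real.log (Real.logb 2 (r:ℝ) + 10) / (r:ℝ))) :=
          mul_le_mul_of_nonneg_left (Real.sqrt_le_sqrt harg) hC2
      _ = 2 * (C2 * Real.sqrt (2 * Real.log (Real.logb 2 (r:ℝ) + 10) / (r:ℝ))) := by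
          rw [Real.sqrt_mul (by norm_num), show Real.sqrt 4 = 2 by
            rw [show (4:ℝ) = 2^2 by norm_num, Real.sqrt_sq (by norm_num)]]
          ring
  linarith

section MeasHelp
variable {X : Type*} [MeasurableSpace X] {H : ℕ → X → Bool}
  {T r : ℕ} {P : ℕ → Measure (X × Bool)}

theorem card_win (hr1 : 1 ≤ r) (hrT : r ≤ T) :
    (Finset.Icc (T - r + 1) T).card = r := by rw [Nat.card_Icc]; omega

theorem avgMeas_prob (hP : ∀ t, IsProbabilityMeasure (P t)) (hr1 : 1 ≤ r) (hrT : r ≤ T) :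
    IsProbabilityMeasure (avgMeas P T r) := by
  refine ⟨?_⟩
  rw [avgMeas, Measure.smul_apply, smul_eq_mul]
  have hsum : (∑ t ∈ Finset.Icc (T - r + 1) T, P t) Set.univ
      = ∑ t ∈ Finset.Icc (T - r + 1) T, (P t) Set.univ := by
    simp [Measure.finset_sum_apply]
  rw [hsum, Finset.sum_congr rfl (fun t _ => (hP t).measure_univ), Finset.sum_const,
    card_win hr1 hrT, nsmul_eq_mul, mul_one]
  have hne : (r : ENNReal) ≠ 0 := by
    have : r ≠ 0 := by omega
    exact_mod_cast this
  exact ENNReal.inv_mul_cancel hne (by simp)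

theorem integral_avg (hHmeas : ∀ n, Measurable (H n)) (hP : ∀ t, IsProbabilityMeasure (P t))
    (n : ℕ) : ∫ z, FB H n z ∂(avgMeas P T r)
      = (r:ℝ)⁻¹ * ∑ t ∈ Finset.Icc (T - r + 1) T, ∫ z, FB H n z ∂(P t) := by
  rw [avgMeas, integral_smul_measure, integral_finset_sum_measure
    (fun t _ => by haveI := hP t; exact integrable_lossB (hHmeas n) (P t))]
  simp [ENNReal.toReal_inv, smul_eq_mul]

theorem abs_integral_FB_le_one (hHmeas : ∀ n, Measurable (H n)) (n : ℕ)
    (ν : Measure (X × Bool)) [IsProbabilityMeasure ν] : |∫ z, FB H n z ∂ν| ≤ 1 :=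
  abs_integral_lossB_le_one (hHmeas n) ν

theorem dF_le_two (hHmeas : ∀ n, Measurable (H n)) (ν₁ ν₂ : Measure (X × Bool))
    [IsProbabilityMeasure ν₁] [IsProbabilityMeasure ν₂] :
    dF (FB H) ν₁ ν₂ ≤ 2 := by
  refine ciSup_le fun n => ?_
  calc |(∫ z, FB H n z ∂ν₁) - ∫ z, FB H n z ∂ν₂|
      ≤ |∫ z, FB H n z ∂ν₁| + |∫ z, FB H n z ∂ν₂| := abs_sub _ _
    _ ≤ 2 := by
        linarith [abs_integral_FB_le_one hHmeas n ν₁, abs_integral_FB_le_one hHmeas n ν₂]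

theorem dF_nonneg (hHmeas : ∀ n, Measurable (H n)) (ν₁ ν₂ : Measure (X × Bool))
    [IsProbabilityMeasure ν₁] [IsProbabilityMeasure ν₂] :
    0 ≤ dF (FB H) ν₁ ν₂ := by
  refine le_trans (abs_nonneg ((∫ z, FB H 0 z ∂ν₁) - ∫ z, FB H 0 z ∂ν₂)) ?_
  exact le_mySup (u := fun n => |(∫ z, FB H n z ∂ν₁) - ∫ z, FB H n z ∂ν₂|) (c := 2)
    (fun n => by
      calc |(∫ z, FB H n z ∂ν₁) - ∫ z, FB H n z ∂ν₂|
          ≤ |∫ z, FB H n z ∂ν₁| + |∫ z, FB H n z ∂ν₂| := abs_sub _ _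
        _ ≤ 2 := by
            linarith [abs_integral_FB_le_one hHmeas n ν₁, abs_integral_FB_le_one hHmeas n ν₂]) 0

theorem bddAbove_drift (hHmeas : ∀ n, Measurable (H n)) (hP : ∀ t, IsProbabilityMeasure (P t))
    (r : ℕ) : BddAbove (Set.range (fun t : Fin r => dF (FB H) (P T) (P (T - (t:ℕ))))) := by
  refine ⟨2, ?_⟩
  rintro x ⟨t, rfl⟩
  haveI := hP T; haveI := hP (T - (t:ℕ))
  exact dF_le_two hHmeas _ _

theorem dF_le_maxDrift_s9 (hHmeas : ∀ n, Measurable (H n)) (hP : ∀ t, IsProbabilityMeasure (P t))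
    {t : ℕ} (ht : t < r) : dF (FB H) (P T) (P (T - t)) ≤ maxDrift (FB H) P T r :=
  le_ciSup (bddAbove_drift hHmeas hP r) (⟨t, ht⟩ : Fin r)

theorem maxDrift_nonneg_s9 (hHmeas : ∀ n, Measurable (H n)) (hP : ∀ t, IsProbabilityMeasure (P t))
    (hr1 : 1 ≤ r) : 0 ≤ maxDrift (FB H) P T r := by
  haveI := hP T; haveI := hP (T - 0)
  exact le_trans (dF_nonneg hHmeas (P T) (P (T - 0))) (dF_le_maxDrift_s9 hHmeas hP hr1)

theorem maxDrift_mono_s9 (hHmeas : ∀ n, Measurable (H n)) (hP : ∀ t, IsProbabilityMeasure (P t))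
    {r r' : ℕ} (h : r ≤ r') : maxDrift (FB H) P T r ≤ maxDrift (FB H) P T r' := by
  rcases Nat.eq_zero_or_pos r with hr | hr
  · subst hr
    rw [maxDrift, Real.iSup_of_isEmpty]
    rcases Nat.eq_zero_or_pos r' with hr' | hr'
    · subst hr'; rw [maxDrift, Real.iSup_of_isEmpty]
    · exact maxDrift_nonneg_s9 hHmeas hP hr'
  · haveI : Nonempty (Fin r) := ⟨⟨0, hr⟩⟩
    refine ciSup_le fun t => ?_
    exact dF_le_maxDrift_s9 hHmeas hP (lt_of_lt_of_le t.2 h)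

theorem dF_PT_avg_le (hHmeas : ∀ n, Measurable (H n)) (hP : ∀ t, IsProbabilityMeasure (P t))
    (hr1 : 1 ≤ r) (hrT : r ≤ T) :
    dF (FB H) (P T) (avgMeas P T r) ≤ maxDrift (FB H) P T r := by
  have hrne : (r:ℝ) ≠ 0 := Nat.cast_ne_zero.mpr (by omega)
  refine ciSup_le fun n => ?_
  rw [integral_avg hHmeas hP n]
  have hcard := card_win hr1 hrT
  have hIT : (∫ z, FB H n z ∂(P T))
      = (r:ℝ)⁻¹ * ∑ t ∈ Finset.Icc (T - r + 1) T, ∫ z, FB H n z ∂(P T) := by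
    rw [Finset.sum_const, hcard, nsmul_eq_mul]
    rw [← mul_assoc, inv_mul_cancel₀ hrne, one_mul]
  rw [hIT, ← mul_sub, ← Finset.sum_sub_distrib, abs_mul,
    abs_of_nonneg (by positivity : (0:ℝ) ≤ (r:ℝ)⁻¹)]
  have hbound : |∑ t ∈ Finset.Icc (T - r + 1) T,
      ((∫ z, FB H n z ∂(P T)) - ∫ z, FB H n z ∂(P t))|
      ≤ ∑ t ∈ Finset.Icc (T - r + 1) T, maxDrift (FB H) P T r := by
    refine le_trans (Finset.abs_sum_le_sum_abs _ _) (Finset.sum_le_sum fun t ht => ?_)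
    rw [Finset.mem_Icc] at ht
    haveI := hP T; haveI := hP t
    have habs : |(∫ z, FB H n z ∂(P T)) - ∫ z, FB H n z ∂(P t)| ≤ dF (FB H) (P T) (P t) :=
      le_mySup (u := fun m => |(∫ z, FB H m z ∂(P T)) - ∫ z, FB H m z ∂(P t)|) (c := 2)
        (fun m => by
          calc |(∫ z, FB H m z ∂(P T)) - ∫ z, FB H m z ∂(P t)|
              ≤ |∫ z, FB H m z ∂(P T)| + |∫ z, FB H m z ∂(P t)| := abs_sub _ _
            _ ≤ 2 := by
                linarith [abs_integral_FB_le_one hHmeas m (P T),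
                  abs_integral_FB_le_one hHmeas m (P t)]) n
    have heq : T - (T - t) = t := by omega
    have hlt : T - t < r := by omega
    calc |(∫ z, FB H n z ∂(P T)) - ∫ z, FB H n z ∂(P t)| ≤ dF (FB H) (P T) (P t) := habs
      _ = dF (FB H) (P T) (P (T - (T - t))) := by rw [heq]
      _ ≤ maxDrift (FB H) P T r := dF_le_maxDrift_s9 hHmeas hP hlt
  calc (r:ℝ)⁻¹ * |∑ t ∈ Finset.Icc (T - r + 1) T,
      ((∫ z, FB H n z ∂(P T)) - ∫ z, FB H n z ∂(P t))|
      ≤ (r:ℝ)⁻¹ * ∑ t ∈ Finset.Icc (T - r + 1) T, maxDrift (FB H) P T r := by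
        have : (0:ℝ) ≤ (r:ℝ)⁻¹ := by positivity
        exact mul_le_mul_of_nonneg_left hbound this
    _ = maxDrift (FB H) P T r := by
        rw [Finset.sum_const, hcard, nsmul_eq_mul, ← mul_assoc,
          inv_mul_cancel₀ hrne, one_mul]

end MeasHelp

theorem det_bound {X Ω : Type*} [MeasurableSpace X]
    (H : ℕ → X → Bool) (hHmeas : ∀ n, Measurable (H n))
    (T : ℕ) (hT : 1 ≤ T) (P : ℕ → Measure (X × Bool))
    (hP : ∀ t, IsProbabilityMeasure (P t))
    (Zs : ℕ → Ω → X × Bool) (C1 C2 δ : ℝ) (hC1 : 0 ≤ C1) (hC2 : 0 ≤ C2)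
    (hδ0 : 0 < δ) (hδ1 : δ < 1) (ω : Ω)
    (hgood : ∀ j : ℕ, 2 ^ j ≤ T →
      dPE (FB H) (avgMeas P T (2 ^ j)) Zs T (2 ^ j) ω ≤ Sfun C1 C2 ((2 ^ j : ℕ) : ℝ) δ)
    (jh : ℕ) (hstop : stopCond (FB H) Zs T C1 C2 δ jh ω)
    (hmin : ∀ j < jh, ¬ stopCond (FB H) Zs T C1 C2 δ j ω)
    (hh hstar : ℕ)
    (hERMω : ∀ n, empAvg Zs T (2 ^ jh) (FB H hh) ω ≤ empAvg Zs T (2 ^ jh) (FB H n) ω)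
    (r : ℕ) (hr1 : 1 ≤ r) (hrT : r ≤ T) :
    (∫ z, FB H hh z ∂(P T)) - (∫ z, FB H hstar z ∂(P T)) ≤
      44 * (21 * Sfun C1 C2 (r : ℝ) δ + maxDrift (FB H) P T r) := by
  haveI := hP T
  have hITb : ∀ n, |∫ z, FB H n z ∂(P T)| ≤ 1 := fun n => abs_integral_FB_le_one hHmeas n (P T)
  have hEMb : ∀ rr n, |empAvg Zs T rr (FB H n) ω| ≤ 1 :=
    fun rr n => abs_empAvg_lossB_le_one Zs T rr ω
  -- per-window bound on the good event
  have hPE : ∀ j : ℕ, 2 ^ j ≤ T → dPE (FB H) (P T) Zs T (2 ^ j) ω ≤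
      Sfun C1 C2 ((2 ^ j : ℕ) : ℝ) δ + maxDrift (FB H) P T (2 ^ j) := by
    intro j hj
    haveI := avgMeas_prob hP Nat.one_le_two_pow hj
    have hIAb : ∀ n, |∫ z, FB H n z ∂(avgMeas P T (2 ^ j))| ≤ 1 :=
      fun n => abs_integral_FB_le_one hHmeas n _
    have tri : dPE (FB H) (P T) Zs T (2 ^ j) ω ≤
        dF (FB H) (P T) (avgMeas P T (2 ^ j)) + dPE (FB H) (avgMeas P T (2 ^ j)) Zs T (2 ^ j) ω :=
      mySup_triangle hITb hIAb (hEMb (2 ^ j))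
    have h1 := dF_PT_avg_le (r := 2 ^ j) hHmeas hP Nat.one_le_two_pow hj
    have h2 := hgood j hj
    linarith
  -- the chosen window fits
  have hjhT : 2 ^ jh ≤ T := by
    cases jh with
    | zero => simpa using hT
    | succ j =>
      have := hmin j (Nat.lt_succ_self j)
      rw [stopCond, not_or] at this
      exact not_lt.mp this.1
  -- ERM bound
  have hERM2 : (∫ z, FB H hh z ∂(P T)) - (∫ z, FB H hstar z ∂(P T)) ≤
      2 * dPE (FB H) (P T) Zs T (2 ^ jh) ω := by
    have bdd : ∀ n, |(∫ z, FB H n z ∂(P T)) - empAvg Zs T (2 ^ jh) (FB H n) ω| ≤ 2 := by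
      intro n
      calc |(∫ z, FB H n z ∂(P T)) - empAvg Zs T (2 ^ jh) (FB H n) ω|
          ≤ |∫ z, FB H n z ∂(P T)| + |empAvg Zs T (2 ^ jh) (FB H n) ω| := abs_sub _ _
        _ ≤ 2 := by linarith [hITb n, hEMb (2 ^ jh) n]
    have e1 : (∫ z, FB H hh z ∂(P T)) - empAvg Zs T (2 ^ jh) (FB H hh) ω ≤
        dPE (FB H) (P T) Zs T (2 ^ jh) ω :=
      le_trans (le_abs_self _)
        (le_mySup (u := fun n => |(∫ z, FB H n z ∂(P T)) - empAvg Zs T (2 ^ jh) (FB H n) ω|)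
          (c := 2) bdd hh)
    have e2 : empAvg Zs T (2 ^ jh) (FB H hstar) ω - (∫ z, FB H hstar z ∂(P T)) ≤
        dPE (FB H) (P T) Zs T (2 ^ jh) ω := by
      refine le_trans ?_
        (le_mySup (u := fun n => |(∫ z, FB H n z ∂(P T)) - empAvg Zs T (2 ^ jh) (FB H n) ω|)
          (c := 2) bdd hstar)
      rw [abs_sub_comm]
      exact le_abs_self _
    linarith [hERMω hstar]
  -- window comparisons
  set j := Nat.log 2 r with hjdef
  have hj1 : 2 ^ j ≤ r := Nat.pow_log_le_self 2 (by omega)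
  have hj2 : r < 2 ^ (j + 1) := Nat.lt_pow_succ_log_self (by norm_num) r
  have hjT : 2 ^ j ≤ T := le_trans hj1 hrT
  have hSr0 : 0 ≤ Sfun C1 C2 (r : ℝ) δ := Sfun_nat_nonneg hC1 hC2 r
  have hDr0 : 0 ≤ maxDrift (FB H) P T r := maxDrift_nonneg_s9 hHmeas hP hr1
  have hShalf : Sfun C1 C2 ((2 ^ j : ℕ) : ℝ) δ ≤ 2 * Sfun C1 C2 (r : ℝ) δ :=
    Sfun_half hC1 hC2 j r hj1 (le_of_lt hj2)
  have hDj : maxDrift (FB H) P T (2 ^ j) ≤ maxDrift (FB H) P T r :=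
    maxDrift_mono_s9 hHmeas hP hj1
  rcases lt_trichotomy jh j with hlt | heq | hgt
  · -- jh < j : large drift detected
    have h2T : 2 ^ (jh + 1) ≤ T := le_trans (Nat.pow_le_pow_right (by norm_num) hlt) hjT
    have hdEE : dEE (FB H) Zs T (2 ^ jh) (2 ^ (jh + 1)) ω > 4 * Sfun C1 C2 ((2 ^ jh : ℕ) : ℝ) δ := by
      rcases hstop with h | h
      · omega
      · exact h
    -- upper bound dEE by drift
    have tri : dEE (FB H) Zs T (2 ^ jh) (2 ^ (jh + 1)) ω ≤
        dPE (FB H) (P T) Zs T (2 ^ jh) ω + dPE (FB H) (P T) Zs T (2 ^ (jh + 1)) ω := by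
      have h := mySup_triangle (a := fun n => empAvg Zs T (2 ^ jh) (FB H n) ω)
        (b := fun n => ∫ z, FB H n z ∂(P T))
        (c := fun n => empAvg Zs T (2 ^ (jh + 1)) (FB H n) ω)
        (hEMb (2 ^ jh)) hITb (hEMb (2 ^ (jh + 1)))
      have hsym : (⨆ n, |empAvg Zs T (2 ^ jh) (FB H n) ω - ∫ z, FB H n z ∂(P T)|)
          = dPE (FB H) (P T) Zs T (2 ^ jh) ω :=
        iSup_congr (fun n => abs_sub_comm _ _)
      rw [hsym] at h
      exact h
    have hPE1 := hPE jh hjhT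
    have hPE2 := hPE (jh + 1) h2T
    have hSstep : Sfun C1 C2 ((2 ^ (jh + 1) : ℕ) : ℝ) δ ≤ Sfun C1 C2 ((2 ^ jh : ℕ) : ℝ) δ := by
      have := Sfun_step (δ := δ) hC1 hC2 jh
      have h0 := Sfun_pow_nonneg (δ := δ) hC1 hC2 jh
      linarith
    have hDstep : maxDrift (FB H) P T (2 ^ jh) ≤ maxDrift (FB H) P T (2 ^ (jh + 1)) :=
      maxDrift_mono_s9 hHmeas hP (Nat.pow_le_pow_right (by norm_num) (Nat.le_succ jh))
    have hSD : Sfun C1 C2 ((2 ^ jh : ℕ) : ℝ) δ ≤ maxDrift (FB H) P T (2 ^ (jh + 1)) := by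
      linarith
    have hDD : maxDrift (FB H) P T (2 ^ (jh + 1)) ≤ maxDrift (FB H) P T r :=
      le_trans (maxDrift_mono_s9 hHmeas hP (Nat.pow_le_pow_right (by norm_num) hlt)) hDj
    have hPEjh := hPE jh hjhT
    nlinarith [hERM2]
  · -- jh = j
    subst heq
    have hPEjh := hPE j hjT
    nlinarith [hERM2]
  · -- j < jh : chaining
    have hnostop : ∀ i, j ≤ i → i < jh →
        2 ^ (i + 1) ≤ T ∧ dEE (FB H) Zs T (2 ^ i) (2 ^ (i + 1)) ω ≤
          4 * Sfun C1 C2 ((2 ^ i : ℕ) : ℝ) δ := by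
      intro i _ hi
      have := hmin i hi
      rw [stopCond, not_or] at this
      exact ⟨not_lt.mp this.1, not_lt.mp this.2⟩
    have hchain : ∀ m, j ≤ m → m ≤ jh → dEE (FB H) Zs T (2 ^ j) (2 ^ m) ω ≤
        ∑ i ∈ Finset.Ico j m, dEE (FB H) Zs T (2 ^ i) (2 ^ (i + 1)) ω := by
      intro m hm
      induction m, hm using Nat.le_induction with
      | base =>
        intro _
        have : dEE (FB H) Zs T (2 ^ j) (2 ^ j) ω = 0 := by
          rw [dEE]
          simp [sub_self, abs_zero, ciSup_const]
        simp [this]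
      | succ m hm ih =>
        intro hmjh
        have ih' := ih (by omega)
        have tri : dEE (FB H) Zs T (2 ^ j) (2 ^ (m + 1)) ω ≤
            dEE (FB H) Zs T (2 ^ j) (2 ^ m) ω + dEE (FB H) Zs T (2 ^ m) (2 ^ (m + 1)) ω :=
          mySup_triangle (hEMb (2 ^ j)) (hEMb (2 ^ m)) (hEMb (2 ^ (m + 1)))
        rw [Finset.sum_Ico_succ_top hm]
        linarith
    have hchain' := hchain jh (le_of_lt hgt) le_rfl
    have hsumS : ∑ i ∈ Finset.Ico j jh, dEE (FB H) Zs T (2 ^ i) (2 ^ (i + 1)) ω ≤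
        16 * Sfun C1 C2 ((2 ^ j : ℕ) : ℝ) δ := by
      calc ∑ i ∈ Finset.Ico j jh, dEE (FB H) Zs T (2 ^ i) (2 ^ (i + 1)) ω
          ≤ ∑ i ∈ Finset.Ico j jh, 4 * Sfun C1 C2 ((2 ^ i : ℕ) : ℝ) δ := by
            refine Finset.sum_le_sum fun i hi => ?_
            rw [Finset.mem_Ico] at hi
            exact (hnostop i hi.1 hi.2).2
        _ = 4 * ∑ i ∈ Finset.Ico j jh, Sfun C1 C2 ((2 ^ i : ℕ) : ℝ) δ := by
            rw [Finset.mul_sum]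
        _ ≤ 16 * Sfun C1 C2 ((2 ^ j : ℕ) : ℝ) δ := by
            have := Sfun_sum (δ := δ) hC1 hC2 j jh
            linarith
    have tri2 : dPE (FB H) (P T) Zs T (2 ^ jh) ω ≤
        dPE (FB H) (P T) Zs T (2 ^ j) ω + dEE (FB H) Zs T (2 ^ j) (2 ^ jh) ω :=
      mySup_triangle hITb (hEMb (2 ^ j)) (hEMb (2 ^ jh))
    have hPEj := hPE j hjT
    nlinarith [hERM2]
theorem sqrt_add_le' {x y : ℝ} (hx : 0 ≤ x) (hy : 0 ≤ y) :
    Real.sqrt (x + y) ≤ Real.sqrt x + Real.sqrt y := by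
  rw [show Real.sqrt x + Real.sqrt y
    = Real.sqrt ((Real.sqrt x + Real.sqrt y)^2) from
      (Real.sqrt_sq (by positivity)).symm]
  apply Real.sqrt_le_sqrt
  nlinarith [Real.sq_sqrt hx, Real.sq_sqrt hy, Real.sqrt_nonneg x, Real.sqrt_nonneg y,
    mul_nonneg (Real.sqrt_nonneg x) (Real.sqrt_nonneg y)]


end AutoProofHelpers

/-- adaptive agnostic learning of binary classifiers under drift.
With probability at least `1 − δ`, the empirical risk minimizer `ĥ` over the
adaptively chosen window `r̂ = 2^ĵ` satisfies
`P_T(L_ĥ) − P_T(L_h*) ≤ 44·min_{1 ≤ r ≤ T}(21·S(r,δ) + max_{0 ≤ t ≤ r−1}‖P_T − P_{T−t}‖_F)`. -/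
theorem stmt9 {X Ω : Type*} [MeasurableSpace X] [MeasurableSpace Ω]
    (μ : Measure Ω) [IsProbabilityMeasure μ]
    (H : ℕ → X → Bool) (hHmeas : ∀ n, Measurable (H n))
    (T : ℕ) (hT : 1 ≤ T) (P : ℕ → Measure (X × Bool))
    (hP : ∀ t, IsProbabilityMeasure (P t))
    (Zs : ℕ → Ω → X × Bool) (hZmeas : ∀ t, Measurable (Zs t))
    (hindep : iIndepFun Zs μ)
    (hdist : ∀ t ∈ Finset.Icc 1 T, μ.map (Zs t) = P t)
    (C1 C2 : ℝ) (hC1 : 0 ≤ C1) (hC2 : 0 ≤ C2)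
    (hUC : ∀ r : ℕ, 1 ≤ r → r ≤ T → ∀ δ' : ℝ, 0 < δ' → δ' < 1 →
      ENNReal.ofReal (1 - δ') ≤ μ {ω | dPE (FB H) (avgMeas P T r) Zs T r ω ≤
        C1 / Real.sqrt r + C2 * Real.sqrt (Real.log (1 / δ') / r)})
    (δ : ℝ) (hδ0 : 0 < δ) (hδ1 : δ < 1)
    (jhat : Ω → ℕ)
    (hjhat : ∀ ω, stopCond (FB H) Zs T C1 C2 δ (jhat ω) ω ∧
      ∀ j < jhat ω, ¬ stopCond (FB H) Zs T C1 C2 δ j ω)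
    (hhat : Ω → ℕ)
    (hERM : ∀ ω, ∀ n, empAvg Zs T (2 ^ jhat ω) (FB H (hhat ω)) ω ≤
      empAvg Zs T (2 ^ jhat ω) (FB H n) ω)
    (hstar : ℕ)
    (hstarOpt : ∀ n, (∫ z, FB H hstar z ∂(P T)) ≤ ∫ z, FB H n z ∂(P T)) :
    ENNReal.ofReal (1 - δ) ≤
      μ {ω | (∫ z, FB H (hhat ω) z ∂(P T)) - (∫ z, FB H hstar z ∂(P T)) ≤
        44 * (Finset.Icc 1 T).inf' (Finset.nonempty_Icc.mpr hT)
          (fun r => 21 * Sfun C1 C2 (r : ℕ) δ + maxDrift (FB H) P T r)} := by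
  have hπ := Real.pi_gt_three
  set J := Nat.log 2 T with hJdef
  set δ' : ℕ → ℝ := fun j => (6 * δ / Real.pi ^ 2) ^ 2 / ((j : ℝ) + 10) ^ 2 with hδ'def
  have hratio_pos : 0 < 6 * δ / Real.pi ^ 2 := by positivity
  have hratio_lt : 6 * δ / Real.pi ^ 2 < 1 := by
    rw [div_lt_one (by positivity)]; nlinarith
  have hδ'pos : ∀ j, 0 < δ' j := fun j => by
    have : (0:ℝ) < ((j:ℝ) + 10) ^ 2 := by positivity
    positivity
  have hδ'lt : ∀ j, δ' j < 1 := by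
    intro j
    have h1 : ((j:ℝ) + 10) ^ 2 ≥ 1 := by nlinarith [Nat.cast_nonneg (α := ℝ) j]
    have h2 : (6 * δ / Real.pi ^ 2) ^ 2 < 1 := by nlinarith
    calc δ' j ≤ (6 * δ / Real.pi ^ 2) ^ 2 / 1 := by
          apply div_le_div_of_nonneg_left (by positivity) (by norm_num) h1 |>.trans_eq rfl
      _ < 1 := by rw [div_one]; exact h2
  have hjT : ∀ j, j ≤ J → 2 ^ j ≤ T := fun j hj =>
    (Nat.le_log_iff_pow_le (by norm_num) (by omega)).mp hj
  -- the good events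
  set good : ℕ → Set Ω := fun j => {ω | dPE (FB H) (avgMeas P T (2 ^ j)) Zs T (2 ^ j) ω ≤
    Sfun C1 C2 ((2 ^ j : ℕ) : ℝ) δ} with hgooddef
  have hmeasEmp : ∀ n rr, Measurable (fun ω => empAvg Zs T rr (FB H n) ω) := by
    intro n rr
    unfold empAvg
    exact (Finset.measurable_sum _ fun t _ =>
      (measurable_lossB (hHmeas n)).comp (hZmeas t)).const_mul _
  have hgoodEq : ∀ j, 2 ^ j ≤ T → good j = ⋂ n : ℕ,
      {ω | |(∫ z, FB H n z ∂(avgMeas P T (2 ^ j))) - empAvg Zs T (2 ^ j) (FB H n) ω| ≤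
        Sfun C1 C2 ((2 ^ j : ℕ) : ℝ) δ} := by
    intro j hj
    haveI := avgMeas_prob hP Nat.one_le_two_pow hj
    have bdd : ∀ ω : Ω, ∀ n : ℕ,
        |(∫ z, FB H n z ∂(avgMeas P T (2 ^ j))) - empAvg Zs T (2 ^ j) (FB H n) ω| ≤ 2 := by
      intro ω n
      calc |(∫ z, FB H n z ∂(avgMeas P T (2 ^ j))) - empAvg Zs T (2 ^ j) (FB H n) ω|
          ≤ |∫ z, FB H n z ∂(avgMeas P T (2 ^ j))| + |empAvg Zs T (2 ^ j) (FB H n) ω| :=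
            abs_sub _ _
        _ ≤ 2 := by
            have e1 : |∫ z, FB H n z ∂(avgMeas P T (2 ^ j))| ≤ 1 :=
              abs_integral_FB_le_one hHmeas n (avgMeas P T (2 ^ j))
            have e2 : |empAvg Zs T (2 ^ j) (FB H n) ω| ≤ 1 :=
              abs_empAvg_lossB_le_one Zs T (2 ^ j) ω
            linarith
    ext ω
    simp only [hgooddef, Set.mem_setOf_eq, Set.mem_iInter]
    constructor
    · intro h n
      refine le_trans ?_ h
      exact le_mySup (u := fun n =>
        |(∫ z, FB H n z ∂(avgMeas P T (2 ^ j))) - empAvg Zs T (2 ^ j) (FB H n) ω|)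
        (c := 2) (bdd ω) n
    · intro h
      exact ciSup_le h
  have hgoodMeas : ∀ j, 2 ^ j ≤ T → MeasurableSet (good j) := by
    intro j hj
    rw [hgoodEq j hj]
    exact MeasurableSet.iInter fun n =>
      measurableSet_le ((measurable_const.sub (hmeasEmp n (2 ^ j))).abs) measurable_const
  -- per-event probability bound
  have hgoodProb : ∀ j, j ≤ J → μ (good j)ᶜ ≤ ENNReal.ofReal (δ' j) := by
    intro j hj
    have h2jT := hjT j hj
    have hUCj := hUC (2 ^ j) Nat.one_le_two_pow h2jT (δ' j) (hδ'pos j) (hδ'lt j)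
    -- the UC bound is below Sfun
    have hbnd : C1 / Real.sqrt ((2 ^ j : ℕ) : ℝ) +
        C2 * Real.sqrt (Real.log (1 / δ' j) / ((2 ^ j : ℕ) : ℝ)) ≤
        Sfun C1 C2 ((2 ^ j : ℕ) : ℝ) δ := by
      have hcast : ((2 ^ j : ℕ) : ℝ) = (2:ℝ) ^ j := by push_cast; ring
      rw [Sfun_pow_eq, hcast]
      set a := Real.log (Real.pi ^ 2 / (6 * δ)) with hadef
      set b := Real.log ((j:ℝ) + 10) with hbdef
      have ha0 : 0 ≤ a := logA_nonneg hδ0 hδ1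
      have hb0 : 0 ≤ b := le_trans (by norm_num) (log_ge_two j)
      have hlogδ' : Real.log (1 / δ' j) = 2 * a + 2 * b := by
        have hj10 : (0:ℝ) < (j:ℝ) + 10 := by positivity
        have h1δ : 1 / δ' j = (Real.pi ^ 2 / (6 * δ) * ((j:ℝ) + 10)) ^ 2 := by
          rw [hδ'def]
          field_simp
        rw [h1δ, Real.log_pow, Real.log_mul (by positivity) hj10.ne', hadef, hbdef]
        push_cast
        ring
      rw [hlogδ']
      have hp : (0:ℝ) < (2:ℝ) ^ j := by positivity
      have hsplit : Real.sqrt ((2 * a + 2 * b) / (2:ℝ) ^ j) ≤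
          Real.sqrt (2 * a) / Real.sqrt ((2:ℝ) ^ j) + Real.sqrt (2 * b / (2:ℝ) ^ j) := by
        rw [show (2 * a + 2 * b) / (2:ℝ) ^ j = 2 * a / (2:ℝ) ^ j + 2 * b / (2:ℝ) ^ j by ring]
        refine le_trans (sqrt_add_le' (by positivity) (by positivity)) ?_
        rw [Real.sqrt_div (by positivity : (0:ℝ) ≤ 2 * a)]
      calc C1 / Real.sqrt ((2:ℝ) ^ j) + C2 * Real.sqrt ((2 * a + 2 * b) / (2:ℝ) ^ j)
          ≤ C1 / Real.sqrt ((2:ℝ) ^ j) +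
            C2 * (Real.sqrt (2 * a) / Real.sqrt ((2:ℝ) ^ j) + Real.sqrt (2 * b / (2:ℝ) ^ j)) := by
            have := mul_le_mul_of_nonneg_left hsplit hC2
            linarith
        _ = (C1 + C2 * Real.sqrt (2 * a)) / Real.sqrt ((2:ℝ) ^ j) +
            C2 * Real.sqrt (2 * b / (2:ℝ) ^ j) := by ring
    have hsub : {ω | dPE (FB H) (avgMeas P T (2 ^ j)) Zs T (2 ^ j) ω ≤
        C1 / Real.sqrt ((2 ^ j : ℕ) : ℝ) +
          C2 * Real.sqrt (Real.log (1 / δ' j) / ((2 ^ j : ℕ) : ℝ))} ⊆ good j := by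
      intro ω hω
      exact le_trans hω hbnd
    have h1 : ENNReal.ofReal (1 - δ' j) ≤ μ (good j) :=
      le_trans hUCj (measure_mono hsub)
    have hcompl : μ (good j)ᶜ = 1 - μ (good j) :=
      prob_compl_eq_one_sub (hgoodMeas j h2jT)
    rw [hcompl]
    have hkey : (1 : ENNReal) - ENNReal.ofReal (1 - δ' j) = ENNReal.ofReal (δ' j) := by
      rw [← ENNReal.ofReal_one, ← ENNReal.ofReal_sub 1 (by linarith [hδ'lt j] : (0:ℝ) ≤ 1 - δ' j)]
      norm_num
    calc (1 : ENNReal) - μ (good j) ≤ 1 - ENNReal.ofReal (1 - δ' j) := tsub_le_tsub_left h1 1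
      _ = ENNReal.ofReal (δ' j) := hkey
  -- sum of failure probabilities
  have hsumδ' : ∑ j ∈ Finset.range (J + 1), δ' j ≤ δ := by
    have hterm : ∀ j : ℕ, δ' j ≤ (6 * δ / Real.pi ^ 2) ^ 2 *
        (1 / ((j:ℝ) + 9) - 1 / ((j:ℝ) + 10)) := by
      intro j
      have h9 : (0:ℝ) < (j:ℝ) + 9 := by positivity
      have h10 : (0:ℝ) < (j:ℝ) + 10 := by positivity
      have heq : 1 / ((j:ℝ) + 9) - 1 / ((j:ℝ) + 10) = 1 / (((j:ℝ) + 9) * ((j:ℝ) + 10)) := by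
        field_simp
        ring
      rw [heq, hδ'def]
      have hle : 1 / ((j:ℝ) + 10) ^ 2 ≤ 1 / (((j:ℝ) + 9) * ((j:ℝ) + 10)) := by
        apply one_div_le_one_div_of_le (by positivity)
        nlinarith
      calc (6 * δ / Real.pi ^ 2) ^ 2 / ((j:ℝ) + 10) ^ 2
          = (6 * δ / Real.pi ^ 2) ^ 2 * (1 / ((j:ℝ) + 10) ^ 2) := by ring
        _ ≤ (6 * δ / Real.pi ^ 2) ^ 2 * (1 / (((j:ℝ) + 9) * ((j:ℝ) + 10))) := by
            exact mul_le_mul_of_nonneg_left hle (by positivity)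
    have htel : ∑ j ∈ Finset.range (J + 1), (1 / ((j:ℝ) + 9) - 1 / ((j:ℝ) + 10)) ≤ 1 / 9 := by
      have := Finset.sum_range_sub' (fun j : ℕ => 1 / ((j:ℝ) + 9)) (J + 1)
      have hcongr : ∑ j ∈ Finset.range (J + 1), (1 / ((j:ℝ) + 9) - 1 / ((j:ℝ) + 10)) =
          ∑ j ∈ Finset.range (J + 1), (1 / ((j:ℝ) + 9) - 1 / (((j+1:ℕ):ℝ) + 9)) := by
        refine Finset.sum_congr rfl fun j _ => ?_
        push_cast
        ring_nf
      rw [hcongr, this]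
      have : (0:ℝ) < ((J + 1 : ℕ):ℝ) + 9 := by positivity
      norm_num
      positivity
    calc ∑ j ∈ Finset.range (J + 1), δ' j
        ≤ ∑ j ∈ Finset.range (J + 1), (6 * δ / Real.pi ^ 2) ^ 2 *
            (1 / ((j:ℝ) + 9) - 1 / ((j:ℝ) + 10)) := Finset.sum_le_sum fun j _ => hterm j
      _ = (6 * δ / Real.pi ^ 2) ^ 2 *
            ∑ j ∈ Finset.range (J + 1), (1 / ((j:ℝ) + 9) - 1 / ((j:ℝ) + 10)) := by
          rw [Finset.mul_sum]
      _ ≤ (6 * δ / Real.pi ^ 2) ^ 2 * (1 / 9) := by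
          exact mul_le_mul_of_nonneg_left htel (by positivity)
      _ ≤ δ := by
          rw [div_pow, div_mul_eq_mul_div, mul_one_div, div_div]
          rw [div_le_iff₀ (by positivity)]
          have hπ2 : (9:ℝ) < Real.pi ^ 2 := by nlinarith
          have hπ4 : (81:ℝ) < (Real.pi ^ 2) ^ 2 := by nlinarith
          nlinarith [mul_lt_mul_of_pos_left hπ4 hδ0, mul_nonneg hδ0.le hδ0.le]
  -- the full good event
  set E : Set Ω := ⋂ j ∈ Finset.range (J + 1), good j with hEdef
  have hEmeas : MeasurableSet E :=
    MeasurableSet.biInter (Finset.range (J + 1)).countable_toSet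
      (fun j hj => hgoodMeas j (hjT j
        (Nat.lt_succ_iff.mp (Finset.mem_range.mp (Finset.mem_coe.mp hj)))))
  have hEcompl : μ Eᶜ ≤ ENNReal.ofReal δ := by
    have h1 : Eᶜ = ⋃ j ∈ Finset.range (J + 1), (good j)ᶜ := by
      rw [hEdef]
      simp [Set.compl_iInter]
    rw [h1]
    calc μ (⋃ j ∈ Finset.range (J + 1), (good j)ᶜ)
        ≤ ∑ j ∈ Finset.range (J + 1), μ (good j)ᶜ := measure_biUnion_finset_le _ _
      _ ≤ ∑ j ∈ Finset.range (J + 1), ENNReal.ofReal (δ' j) :=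
          Finset.sum_le_sum fun j hj => hgoodProb j (by simp at hj; omega)
      _ = ENNReal.ofReal (∑ j ∈ Finset.range (J + 1), δ' j) :=
          (ENNReal.ofReal_sum_of_nonneg fun j _ => (hδ'pos j).le).symm
      _ ≤ ENNReal.ofReal δ := ENNReal.ofReal_le_ofReal hsumδ'
  have hEprob : ENNReal.ofReal (1 - δ) ≤ μ E := by
    have h2 : μ E = 1 - μ Eᶜ := by
      rw [← prob_compl_eq_one_sub hEmeas.compl, compl_compl]
    calc ENNReal.ofReal (1 - δ) = 1 - ENNReal.ofReal δ := by
          rw [ENNReal.ofReal_sub 1 hδ0.le, ENNReal.ofReal_one]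
      _ ≤ 1 - μ Eᶜ := tsub_le_tsub_left hEcompl 1
      _ = μ E := h2.symm
  -- E is contained in the target event
  refine le_trans hEprob (measure_mono ?_)
  intro ω hω
  have hgoodω : ∀ j : ℕ, 2 ^ j ≤ T →
      dPE (FB H) (avgMeas P T (2 ^ j)) Zs T (2 ^ j) ω ≤ Sfun C1 C2 ((2 ^ j : ℕ) : ℝ) δ := by
    intro j hj
    have hjJ : j ≤ J := (Nat.le_log_iff_pow_le (by norm_num) (by omega)).mpr hj
    have := Set.mem_iInter₂.mp hω j (Finset.mem_range.mpr (by omega))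
    exact this
  simp only [Set.mem_setOf_eq]
  obtain ⟨r0, hr0mem, hinf⟩ := Finset.exists_mem_eq_inf' (Finset.nonempty_Icc.mpr hT)
    (fun r => 21 * Sfun C1 C2 (r : ℕ) δ + maxDrift (FB H) P T r)
  rw [hinf]
  rw [Finset.mem_Icc] at hr0mem
  exact det_bound H hHmeas T hT P hP Zs C1 C2 δ hC1 hC2 hδ0 hδ1 ω hgoodω
    (jhat ω) (hjhat ω).1 (hjhat ω).2 (hhat ω) hstar (hERM ω) r0 hr0mem.1 hr0mem.2
end
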